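/- arXiv:math/0011026 — 7 statements merged into one kernel-verified Lean document; each statement's English description precedes it below -/
import Mathlib

section
/- The zero-function φ_a is strictly increasing in s on its domain: if s₁ < s₂ and both φ_a(s₁), φ_a(s₂) are finite, then φ_a(s₁) < φ_a(s₂). -/
/-!
Let `z₁, z₂` be the first zeros of `u₁` after `s₁` and of `u₂` after `s₂`. Both solutions start
positive, so `u₁ > 0` on `(s₁, z₁)` and `u₂ > 0` on `(s₂, z₂)`, forcing `u₂'(z₂) ≤ 0`.
The Wronskian `W = u₁ · p u₂' - u₂ · p u₁'` of two solutions of the same equation is constant.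
If `z₂ ≤ z₁`, then `W(s₂) = u₁(s₂) > 0` while `W(z₂) = u₁(z₂) · p(z₂) u₂'(z₂) ≤ 0`.
-/

open Set Filter Topology

section SignNearZero

variable {u : ℝ → ℝ} {s d : ℝ}

lemma eventually_pos_nhdsGT_of_hasDerivAt_pos (hd : HasDerivAt u d s) (hu : u s = 0)
    (hd_pos : 0 < d) : ∀ᶠ t in 𝓝[>] s, 0 < u t := by
  filter_upwards [nhdsWithin_le_nhds (eventually_nhdsWithin_sign_eq_of_deriv_pos
    (hd.deriv ▸ hd_pos) hu), self_mem_nhdsWithin] with t hsign ht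
  rw [sign_pos (sub_pos.2 ht)] at hsign
  exact sign_eq_one_iff.1 hsign

lemma eventually_neg_nhdsLT_of_hasDerivAt_pos (hd : HasDerivAt u d s) (hu : u s = 0)
    (hd_pos : 0 < d) : ∀ᶠ t in 𝓝[<] s, u t < 0 := by
  filter_upwards [nhdsWithin_le_nhds (eventually_nhdsWithin_sign_eq_of_deriv_pos
    (hd.deriv ▸ hd_pos) hu), self_mem_nhdsWithin] with t hsign ht
  rw [sign_neg (sub_neg.2 ht)] at hsign
  exact sign_eq_neg_one_iff.1 hsign

lemma hasDerivAt_nonpos_of_eventually_pos_nhdsLT (hd : HasDerivAt u d s) (hu : u s = 0)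
    (hpos : ∀ᶠ t in 𝓝[<] s, 0 < u t) : d ≤ 0 := by
  by_contra! hd_pos
  obtain ⟨t, hut_pos, hut_neg⟩ :=
    (hpos.and (eventually_neg_nhdsLT_of_hasDerivAt_pos hd hu hd_pos)).exists
  exact hut_pos.not_gt hut_neg

end SignNearZero

/-- The paper's `φ_a(s)` when `u` is the solution started at `s`. Since `sInf ∅ = 0` in `ℝ`, it is
meaningful only when `u` has a zero after `s`. -/
noncomputable def firstZeroAfter (u : ℝ → ℝ) (s : ℝ) : ℝ :=
  sInf {t | s < t ∧ u t = 0}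

section FirstZero

variable {u : ℝ → ℝ} {s : ℝ}

lemma bddBelow_zerosAfter : BddBelow {t | s < t ∧ u t = 0} :=
  ⟨s, fun _ ht => ht.1.le⟩

lemma firstZeroAfter_le {t : ℝ} (hst : s < t) (hut : u t = 0) : firstZeroAfter u s ≤ t :=
  csInf_le bddBelow_zerosAfter ⟨hst, hut⟩

lemma apply_firstZeroAfter (hu : Continuous u) (hne : {t | s < t ∧ u t = 0}.Nonempty) :
    u (firstZeroAfter u s) = 0 :=
  closure_minimal (fun _ ht => ht.2) (isClosed_eq hu continuous_const)
    (csInf_mem_closure hne bddBelow_zerosAfter)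

lemma lt_firstZeroAfter (hpos : ∀ᶠ t in 𝓝[>] s, 0 < u t)
    (hne : {t | s < t ∧ u t = 0}.Nonempty) : s < firstZeroAfter u s := by
  obtain ⟨c, hsc, hpos_c⟩ := (nhdsGT_basis s).eventually_iff.1 hpos
  refine hsc.trans_le (le_csInf hne fun t ⟨hst, hut⟩ => ?_)
  by_contra! htc
  exact (hpos_c ⟨hst, htc⟩).ne' hut

/-- A sign change would produce an earlier zero by the intermediate value theorem. -/
lemma pos_of_mem_Ioo_firstZeroAfter (hu : Continuous u) (hpos : ∀ᶠ t in 𝓝[>] s, 0 < u t)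
    {t : ℝ} (ht : t ∈ Ioo s (firstZeroAfter u s)) : 0 < u t := by
  obtain ⟨w, huw, hsw, hwt⟩ := (hpos.and (Ioo_mem_nhdsGT ht.1)).exists
  have hsub : Icc w t ⊆ Ioo s (firstZeroAfter u s) := Icc_subset_Ioo hsw ht.2
  by_contra! hut
  obtain ⟨r, hr, hur⟩ := isPreconnected_Icc.intermediate_value (right_mem_Icc.2 hwt.le)
    (left_mem_Icc.2 hwt.le) hu.continuousOn ⟨hut, huw.le⟩
  exact (hsub hr).2.not_ge (firstZeroAfter_le (hsub hr).1 hur)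

end FirstZero

/-- Abel's identity. -/
lemma wronskian_eq_of_sturmLiouville {p c u₁ u₁' u₂ u₂' : ℝ → ℝ}
    (hderiv₁ : ∀ t, HasDerivAt u₁ (u₁' t) t)
    (hODE₁ : ∀ t, HasDerivAt (fun τ => p τ * u₁' τ) (c t * u₁ t) t)
    (hderiv₂ : ∀ t, HasDerivAt u₂ (u₂' t) t)
    (hODE₂ : ∀ t, HasDerivAt (fun τ => p τ * u₂' τ) (c t * u₂ t) t) (x y : ℝ) :
    u₁ x * (p x * u₂' x) - u₂ x * (p x * u₁' x) = u₁ y * (p y * u₂' y) - u₂ y * (p y * u₁' y) := by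
  have hW : ∀ t, HasDerivAt (fun τ => u₁ τ * (p τ * u₂' τ) - u₂ τ * (p τ * u₁' τ)) 0 t :=
    fun t => (((hderiv₁ t).mul (hODE₂ t)).sub ((hderiv₂ t).mul (hODE₁ t))).congr_deriv (by ring)
  exact is_const_of_deriv_eq_zero (fun t => (hW t).differentiableAt) (fun t => (hW t).deriv) x y

theorem zero_function_strictMono_in_s_general
    (p q m : ℝ → ℝ) (a s₁ s₂ : ℝ) (u₁ u₁' u₂ u₂' : ℝ → ℝ)
    (hppos : ∀ t, 0 < p t)
    (hu₁s : u₁ s₁ = 0) (hu₁'s : u₁' s₁ = 1 / p s₁)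
    (hderiv₁ : ∀ t, HasDerivAt u₁ (u₁' t) t)
    (hODE₁ : ∀ t, HasDerivAt (fun τ => p τ * u₁' τ) (q t * u₁ t - a * m t * u₁ t) t)
    (hu₂s : u₂ s₂ = 0) (hu₂'s : u₂' s₂ = 1 / p s₂)
    (hderiv₂ : ∀ t, HasDerivAt u₂ (u₂' t) t)
    (hODE₂ : ∀ t, HasDerivAt (fun τ => p τ * u₂' τ) (q t * u₂ t - a * m t * u₂ t) t)
    (hs : s₁ < s₂)
    (hne₁ : {t | s₁ < t ∧ u₁ t = 0}.Nonempty)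
    (hne₂ : {t | s₂ < t ∧ u₂ t = 0}.Nonempty) :
    sInf {t | s₁ < t ∧ u₁ t = 0} < sInf {t | s₂ < t ∧ u₂ t = 0} := by
  change firstZeroAfter u₁ s₁ < firstZeroAfter u₂ s₂
  set z₁ := firstZeroAfter u₁ s₁
  set z₂ := firstZeroAfter u₂ s₂
  have hcont₁ : Continuous u₁ := continuous_iff_continuousAt.2 fun t => (hderiv₁ t).continuousAt
  have hcont₂ : Continuous u₂ := continuous_iff_continuousAt.2 fun t => (hderiv₂ t).continuousAt
  have hpos₁ := eventually_pos_nhdsGT_of_hasDerivAt_pos (hderiv₁ s₁) hu₁s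
    (hu₁'s ▸ one_div_pos.2 (hppos s₁))
  have hpos₂ := eventually_pos_nhdsGT_of_hasDerivAt_pos (hderiv₂ s₂) hu₂s
    (hu₂'s ▸ one_div_pos.2 (hppos s₂))
  have hs₂z₂ : s₂ < z₂ := lt_firstZeroAfter hpos₂ hne₂
  have hu₂z₂ : u₂ z₂ = 0 := apply_firstZeroAfter hcont₂ hne₂
  have hu₂'z₂ : u₂' z₂ ≤ 0 := hasDerivAt_nonpos_of_eventually_pos_nhdsLT (hderiv₂ z₂) hu₂z₂
    (mem_of_superset (Ioo_mem_nhdsLT hs₂z₂) fun t ht => pos_of_mem_Ioo_firstZeroAfter hcont₂ hpos₂ ht)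
  have hW := wronskian_eq_of_sturmLiouville (c := fun t => q t - a * m t) hderiv₁
    (fun t => (hODE₁ t).congr_deriv (by ring)) hderiv₂
    (fun t => (hODE₂ t).congr_deriv (by ring)) s₂ z₂
  rw [hu₂s, hu₂'s, hu₂z₂, mul_one_div_cancel (hppos s₂).ne'] at hW
  by_contra! hz₂z₁
  have hu₁s₂ : 0 < u₁ s₂ := pos_of_mem_Ioo_firstZeroAfter hcont₁ hpos₁ ⟨hs, hs₂z₂.trans_le hz₂z₁⟩
  have hu₁z₂ : 0 ≤ u₁ z₂ := by
    rcases hz₂z₁.lt_or_eq with hlt | heq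
    · exact (pos_of_mem_Ioo_firstZeroAfter hcont₁ hpos₁ ⟨hs.trans hs₂z₂, hlt⟩).le
    · rw [heq, apply_firstZeroAfter hcont₁ hne₁]
  nlinarith [mul_nonpos_of_nonneg_of_nonpos hu₁z₂
    (mul_nonpos_of_nonneg_of_nonpos (hppos z₂).le hu₂'z₂)]

/-- The zero-function `φ_a` is strictly increasing in `s` on its
domain: if `s₁ < s₂` and both first zeros are finite, then `φ_a(s₁) < φ_a(s₂)`.
Here `u₁, u₂` are the solutions of `-(p u')' + q u = a·m·u` vanishing at `s₁`
resp. `s₂` with `u'(sᵢ) = 1/p(sᵢ)`. -/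
theorem zero_function_strictMono_in_s
    (p q m : ℝ → ℝ) (a s₁ s₂ : ℝ) (u₁ u₁' u₂ u₂' : ℝ → ℝ)
    (hp : Continuous p) (hq : Continuous q) (hm : Continuous m)
    (hppos : ∀ t, 0 < p t) (hqnn : ∀ t, 0 ≤ q t)
    (hu₁s : u₁ s₁ = 0) (hu₁'s : u₁' s₁ = 1 / p s₁)
    (hderiv₁ : ∀ t, HasDerivAt u₁ (u₁' t) t)
    (hODE₁ : ∀ t, HasDerivAt (fun τ => p τ * u₁' τ) (q t * u₁ t - a * m t * u₁ t) t)
    (hu₂s : u₂ s₂ = 0) (hu₂'s : u₂' s₂ = 1 / p s₂)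
    (hderiv₂ : ∀ t, HasDerivAt u₂ (u₂' t) t)
    (hODE₂ : ∀ t, HasDerivAt (fun τ => p τ * u₂' τ) (q t * u₂ t - a * m t * u₂ t) t)
    (hs : s₁ < s₂)
    (hne₁ : {t | s₁ < t ∧ u₁ t = 0}.Nonempty)
    (hne₂ : {t | s₂ < t ∧ u₂ t = 0}.Nonempty) :
    sInf {t | s₁ < t ∧ u₁ t = 0} < sInf {t | s₂ < t ∧ u₂ t = 0} :=
  zero_function_strictMono_in_s_general p q m a s₁ s₂ u₁ u₁' u₂ u₂' hppos hu₁s hu₁'s hderiv₁ hODE₁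
    hu₂s hu₂'s hderiv₂ hODE₂ hs hne₁ hne₂
end

section
/- For each fixed s, the zero-function a ↦ φ_a(s) is decreasing for a ≥ 0: if 0 ≤ a₁ < a₂ and φ_{a₁}(s) is finite, then φ_{a₂}(s) ≤ φ_{a₁}(s), with strict inequality when both are finite. -/
/-!
Let `T` be the first zero of `u₁` after `s`. Multiplying the equation of `u₁` by `u₁` and
integrating over `[s, T]` gives `a₁ ∫ m u₁² = ∫ (p u₁'² + q u₁²) > 0`, hence `∫ m u₁² > 0`.
If `u₂` had no zero in `(s, T)`, Picone's identity
  `(u₁ (p u₁' - (u₁ / u₂) p u₂'))' = (a₂ - a₁) m u₁² + p (u₁' - u₁ u₂' / u₂)²`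
integrated over `(s, T)` would give `(a₂ - a₁) ∫ m u₁² ≤ 0`: the Picone function tends to `0` at
both ends, since `u₁` vanishes there and `u₁ / u₂` has a limit (at a common zero the quotient of
the derivatives, as `u₂' ≠ 0` at a zero of the nontrivial solution `u₂` by uniqueness).
-/

open Set Filter Topology

theorem integral_le_sub_of_hasDerivAt_of_tendsto {f f' φ : ℝ → ℝ} {a b fa fb : ℝ}
    (hab : a < b) (hderiv : ∀ x ∈ Ioo a b, HasDerivAt f (f' x) x)
    (hφ : IntervalIntegrable φ MeasureTheory.volume a b) (hle : ∀ x ∈ Ioo a b, φ x ≤ f' x)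
    (ha : Tendsto f (𝓝[>] a) (𝓝 fa)) (hb : Tendsto f (𝓝[<] b) (𝓝 fb)) :
    ∫ x in a..b, φ x ≤ fb - fa := by
  set F : ℝ → ℝ := Function.update (Function.update f a fa) b fb
  have hF : ∀ x ∈ Ioo a b, HasDerivAt F (f' x) x := by
    refine fun x hx => (hderiv x hx).congr_of_eventuallyEq ?_
    filter_upwards [Ioo_mem_nhds hx.1 hx.2] with y hy
    simp only [F, Function.update_of_ne hy.2.ne, Function.update_of_ne hy.1.ne']
  have hcont : ContinuousOn F (Icc a b) := by
    rw [continuousOn_update_iff, continuousOn_update_iff, Icc_sdiff_right, Ico_sdiff_left]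
    refine ⟨⟨fun z hz => (hderiv z hz).continuousAt.continuousWithinAt, ?_⟩, ?_⟩
    · exact fun _ => ha.mono_left (nhdsWithin_mono _ Ioo_subset_Ioi_self)
    · rintro -
      refine (hb.congr' ?_).mono_left (nhdsWithin_mono _ Ico_subset_Iio_self)
      filter_upwards [Ioo_mem_nhdsLT hab] with _ hz using
        (Function.update_of_ne hz.1.ne' _ _).symm
  simpa [F, hab.ne, hab.ne'] using intervalIntegral.integral_le_sub_of_hasDeriv_right_of_le
    hab.le hcont (fun x hx => (hF x hx).hasDerivWithinAt)
    ((intervalIntegrable_iff_integrableOn_Icc_of_le hab.le).1 hφ) hle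

theorem eq_zero_of_norm_deriv_le_mul_norm_of_eq_zero_left {E : Type*} [NormedAddCommGroup E]
    [NormedSpace ℝ E] {f f' : ℝ → E} {K a b : ℝ} (hf : ∀ x ∈ Icc a b, HasDerivAt f (f' x) x)
    (hb : f b = 0) (bound : ∀ x ∈ Ioc a b, ‖f' x‖ ≤ K * ‖f x‖) :
    ∀ x ∈ Icc a b, f x = 0 := by
  have hrefl : ∀ x ∈ Icc (-b) (-a), HasDerivAt (fun y => f (-y)) (-f' (-x)) x := fun x hx => by
    simpa [Function.comp_def] using
      (hf (-x) ⟨le_neg.1 hx.2, neg_le.1 hx.1⟩).scomp x (hasDerivAt_neg x)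
  have hzero := eq_zero_of_abs_deriv_le_mul_abs_self_of_eq_zero_right (K := K)
    (fun x hx => (hrefl x hx).continuousAt.continuousWithinAt)
    (fun x hx => (hrefl x (Ico_subset_Icc_self hx)).hasDerivWithinAt) (by simpa using hb)
    (fun x hx => by simpa using bound (-x) ⟨lt_neg.1 hx.2, neg_le.1 hx.1⟩)
  intro x hx
  simpa using hzero (-x) ⟨neg_le_neg hx.2, neg_le_neg hx.1⟩

theorem continuous_of_hasDerivAt_mul {p v g : ℝ → ℝ} (hp : Continuous p) (hp0 : ∀ t, p t ≠ 0)
    (h : ∀ t, HasDerivAt (fun τ => p τ * v τ) (g t) t) : Continuous v := by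
  have hpv : Continuous fun t => p t * v t :=
    continuous_iff_continuousAt.2 fun t => (h t).continuousAt
  exact (hpv.div hp hp0).congr fun t => mul_div_cancel_left₀ _ (hp0 t)

theorem sturmLiouville_eq_zero_of_eq_zero_left {p Q u u' : ℝ → ℝ} {a b : ℝ}
    (hp : Continuous p) (hp0 : ∀ t, p t ≠ 0) (hQ : Continuous Q)
    (hu : ∀ t, HasDerivAt u (u' t) t)
    (hpu : ∀ t, HasDerivAt (fun τ => p τ * u' τ) (Q t * u t) t)
    (hub : u b = 0) (hu'b : u' b = 0) : ∀ x ∈ Icc a b, u x = 0 ∧ u' x = 0 := by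
  obtain ⟨C, hC⟩ := isCompact_Icc.exists_bound_of_continuousOn (s := Icc a b)
    ((hp.inv₀ hp0).prodMk hQ).continuousOn
  -- the first-order system for `(u, p u')` is linear with coefficients `1 / p` and `Q`
  have hbound : ∀ x ∈ Ioc a b,
      ‖(u' x, Q x * u x)‖ ≤ C * ‖(u x, p x * u' x)‖ := fun x hx => by
    have hp' : ‖(p x)⁻¹‖ ≤ C := (norm_fst_le _).trans (hC x (Ioc_subset_Icc_self hx))
    have hQ' : ‖Q x‖ ≤ C := (norm_snd_le _).trans (hC x (Ioc_subset_Icc_self hx))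
    have hC0 : 0 ≤ C := (norm_nonneg _).trans hQ'
    refine norm_prod_le_iff.2 ⟨?_, ?_⟩
    · calc ‖u' x‖ = ‖(p x)⁻¹‖ * ‖p x * u' x‖ := by
            rw [← norm_mul, inv_mul_cancel_left₀ (hp0 x)]
        _ ≤ C * ‖(u x, p x * u' x)‖ :=
            mul_le_mul hp' (norm_snd_le (u x, p x * u' x)) (norm_nonneg _) hC0
    · calc ‖Q x * u x‖ = ‖Q x‖ * ‖u x‖ := norm_mul _ _
        _ ≤ C * ‖(u x, p x * u' x)‖ :=
            mul_le_mul hQ' (norm_fst_le (u x, p x * u' x)) (norm_nonneg _) hC0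
  have hv := eq_zero_of_norm_deriv_le_mul_norm_of_eq_zero_left
    (fun t _ => (hu t).prodMk (hpu t)) (by simp [hub, hu'b]) hbound
  intro x hx
  simpa only [Prod.mk_eq_zero, mul_eq_zero, hp0 x, false_or] using hv x hx

theorem lt_sInf_and_eq_zero_of_eventually_ne {u : ℝ → ℝ} {s : ℝ} (hu : Continuous u)
    (hev : ∀ᶠ t in 𝓝[>] s, u t ≠ 0) (hne : {t | s < t ∧ u t = 0}.Nonempty) :
    s < sInf {t | s < t ∧ u t = 0} ∧ u (sInf {t | s < t ∧ u t = 0}) = 0 := by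
  obtain ⟨b, hsb, hb⟩ := (nhdsGT_basis s).eventually_iff.1 hev
  have hbound : ∀ t ∈ {t | s < t ∧ u t = 0}, b ≤ t := fun t ht =>
    not_lt.1 fun htb => hb ⟨ht.1, htb⟩ ht.2
  refine ⟨hsb.trans_le (le_csInf hne hbound), ?_⟩
  have hclosed : IsClosed (u ⁻¹' {0}) := isClosed_singleton.preimage hu
  exact closure_minimal (fun t ht => ht.2) hclosed (csInf_mem_closure hne ⟨b, hbound⟩)

theorem tendsto_div_of_hasDerivAt_of_eq_zero {u₁ u₂ : ℝ → ℝ} {d₁ d₂ x : ℝ}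
    (h₁ : HasDerivAt u₁ d₁ x) (h₂ : HasDerivAt u₂ d₂ x) (hx₁ : u₁ x = 0) (hx₂ : u₂ x = 0)
    (hd₂ : d₂ ≠ 0) : Tendsto (fun t => u₁ t / u₂ t) (𝓝[≠] x) (𝓝 (d₁ / d₂)) := by
  refine ((hasDerivAt_iff_tendsto_slope.1 h₁).div
    (hasDerivAt_iff_tendsto_slope.1 h₂) hd₂).congr' ?_
  filter_upwards [self_mem_nhdsWithin] with t ht
  rw [Pi.div_apply, slope_def_field, slope_def_field, hx₁, hx₂, sub_zero, sub_zero,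
    div_div_div_cancel_right₀ (sub_ne_zero.2 ht)]

noncomputable def picone (p u₁ u₁' u₂ u₂' : ℝ → ℝ) (t : ℝ) : ℝ :=
  u₁ t * (p t * u₁' t - u₁ t / u₂ t * (p t * u₂' t))

section Picone

variable {p u₁ u₁' u₂ u₂' : ℝ → ℝ}

theorem hasDerivAt_picone {Q₁ Q₂ t : ℝ} (h₁ : HasDerivAt u₁ (u₁' t) t)
    (hp₁ : HasDerivAt (fun τ => p τ * u₁' τ) (Q₁ * u₁ t) t) (h₂ : HasDerivAt u₂ (u₂' t) t)
    (hp₂ : HasDerivAt (fun τ => p τ * u₂' τ) (Q₂ * u₂ t) t) (ht : u₂ t ≠ 0) :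
    HasDerivAt (picone p u₁ u₁' u₂ u₂')
      ((Q₁ - Q₂) * u₁ t ^ 2 + p t * (u₁' t - u₁ t * u₂' t / u₂ t) ^ 2) t := by
  refine (h₁.mul (hp₁.sub ((h₁.div h₂ ht).mul hp₂))).congr_deriv ?_
  simp only [Pi.sub_apply, Pi.mul_apply, Pi.div_apply]
  field_simp
  ring

theorem tendsto_picone_zero {l : Filter ℝ} {x L : ℝ} (hl : l ≤ 𝓝 x) (hx : u₁ x = 0)
    (hu₁ : ContinuousAt u₁ x) (hpu₁ : ContinuousAt (fun t => p t * u₁' t) x)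
    (hpu₂ : ContinuousAt (fun t => p t * u₂' t) x)
    (hratio : Tendsto (fun t => u₁ t / u₂ t) l (𝓝 L)) :
    Tendsto (picone p u₁ u₁' u₂ u₂') l (𝓝 0) := by
  have := (hu₁.tendsto.mono_left hl).mul
    ((hpu₁.tendsto.mono_left hl).sub (hratio.mul (hpu₂.tendsto.mono_left hl)))
  rwa [hx, zero_mul] at this

end Picone

theorem integral_mul_sq_pos_of_sturmLiouville {p q m u u' : ℝ → ℝ} {a s T : ℝ}
    (hp : Continuous p) (hppos : ∀ t, 0 < p t) (hq : Continuous q) (hqnn : ∀ t, 0 ≤ q t)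
    (hm : Continuous m) (ha : 0 ≤ a) (hu : ∀ t, HasDerivAt u (u' t) t)
    (hpu : ∀ t, HasDerivAt (fun τ => p τ * u' τ) ((q t - a * m t) * u t) t)
    (hsT : s < T) (hus : u s = 0) (huT : u T = 0) (hu's : u' s ≠ 0) :
    0 < ∫ t in s..T, m t * u t ^ 2 := by
  have cu : Continuous u := continuous_iff_continuousAt.2 fun t => (hu t).continuousAt
  have cu' : Continuous u' := continuous_of_hasDerivAt_mul hp (fun t => (hppos t).ne') hpu
  have cenergy : Continuous fun t => p t * u' t ^ 2 + q t * u t ^ 2 := by fun_prop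
  have cweight : Continuous fun t => a * (m t * u t ^ 2) := by fun_prop
  have henergy : ∫ t in s..T, (p t * u' t ^ 2 + q t * u t ^ 2) =
      a * ∫ t in s..T, m t * u t ^ 2 := by
    rw [← intervalIntegral.integral_const_mul, ← sub_eq_zero,
      ← intervalIntegral.integral_sub (cenergy.intervalIntegrable _ _)
        (cweight.intervalIntegrable _ _),
      intervalIntegral.integral_eq_sub_of_hasDerivAt (f := fun t => u t * (p t * u' t))
        (f' := fun t => p t * u' t ^ 2 + q t * u t ^ 2 - a * (m t * u t ^ 2))
        (fun t _ => ((hu t).mul (hpu t)).congr_deriv (by ring))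
        ((cenergy.sub cweight).intervalIntegrable _ _), hus, huT]
    ring
  have hpos : 0 < ∫ t in s..T, (p t * u' t ^ 2 + q t * u t ^ 2) :=
    intervalIntegral.integral_pos hsT cenergy.continuousOn
      (fun t _ => add_nonneg (mul_nonneg (hppos t).le (sq_nonneg _))
        (mul_nonneg (hqnn t) (sq_nonneg _)))
      ⟨s, left_mem_Icc.2 hsT.le, add_pos_of_pos_of_nonneg
        (mul_pos (hppos s) (by positivity)) (mul_nonneg (hqnn s) (sq_nonneg _))⟩
  exact pos_of_mul_pos_right (henergy ▸ hpos) ha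

theorem exists_zero_of_integral_sub_mul_sq_pos {p Q₁ Q₂ u₁ u₁' u₂ u₂' : ℝ → ℝ} {s T : ℝ}
    (hp : Continuous p) (hppos : ∀ t, 0 < p t) (hQ₂ : Continuous Q₂)
    (hu₁ : ∀ t, HasDerivAt u₁ (u₁' t) t)
    (hpu₁ : ∀ t, HasDerivAt (fun τ => p τ * u₁' τ) (Q₁ t * u₁ t) t)
    (hu₂ : ∀ t, HasDerivAt u₂ (u₂' t) t)
    (hpu₂ : ∀ t, HasDerivAt (fun τ => p τ * u₂' τ) (Q₂ t * u₂ t) t)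
    (hsT : s < T) (hu₁s : u₁ s = 0) (hu₁T : u₁ T = 0) (hu₂s : u₂ s = 0) (hu₂'s : u₂' s ≠ 0)
    (hpos : 0 < ∫ t in s..T, (Q₁ t - Q₂ t) * u₁ t ^ 2) :
    ∃ t ∈ Ioo s T, u₂ t = 0 := by
  by_contra! hne
  have hratio_s : Tendsto (fun t => u₁ t / u₂ t) (𝓝[>] s) (𝓝 (u₁' s / u₂' s)) :=
    (tendsto_div_of_hasDerivAt_of_eq_zero (hu₁ s) (hu₂ s) hu₁s hu₂s hu₂'s).mono_left
      (nhdsGT_le_nhdsNE s)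
  obtain ⟨L, hratio_T⟩ : ∃ L, Tendsto (fun t => u₁ t / u₂ t) (𝓝[<] T) (𝓝 L) := by
    by_cases hu₂T : u₂ T = 0
    · have hu₂'T : u₂' T ≠ 0 := fun h => hu₂'s
        (sturmLiouville_eq_zero_of_eq_zero_left hp (fun t => (hppos t).ne') hQ₂ hu₂ hpu₂
          hu₂T h s ⟨le_rfl, hsT.le⟩).2
      exact ⟨_, (tendsto_div_of_hasDerivAt_of_eq_zero (hu₁ T) (hu₂ T) hu₁T hu₂T
        hu₂'T).mono_left (nhdsLT_le_nhdsNE T)⟩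
    · exact ⟨_, ((hu₁ T).continuousAt.div (hu₂ T).continuousAt hu₂T).tendsto.mono_left
        nhdsWithin_le_nhds⟩
  have hpicone := integral_le_sub_of_hasDerivAt_of_tendsto hsT
    (fun t ht => hasDerivAt_picone (hu₁ t) (hpu₁ t) (hu₂ t) (hpu₂ t) (hne t ht))
    (intervalIntegral.intervalIntegrable_of_integral_ne_zero hpos.ne')
    (fun t _ => le_add_of_nonneg_right (mul_nonneg (hppos t).le (sq_nonneg _)))
    (tendsto_picone_zero nhdsWithin_le_nhds hu₁s (hu₁ s).continuousAt (hpu₁ s).continuousAt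
      (hpu₂ s).continuousAt hratio_s)
    (tendsto_picone_zero nhdsWithin_le_nhds hu₁T (hu₁ T).continuousAt (hpu₁ T).continuousAt
      (hpu₂ T).continuousAt hratio_T)
  linarith

/-- For fixed `s`, the zero-function `a ↦ φ_a(s)` is decreasing for
`a ≥ 0`: if `0 ≤ a₁ < a₂` and `φ_{a₁}(s)` is finite, then `φ_{a₂}(s)` is finite as
well and `φ_{a₂}(s) < φ_{a₁}(s)` (strict inequality when both are finite).
Here `uᵢ` solves `-(p u')' + q u = aᵢ·m·u` with `uᵢ(s) = 0`, `uᵢ'(s) = 1/p(s)`. -/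
theorem zero_function_decreasing_in_a
    (p q m : ℝ → ℝ) (a₁ a₂ s : ℝ) (u₁ u₁' u₂ u₂' : ℝ → ℝ)
    (hp : Continuous p) (hq : Continuous q) (hm : Continuous m)
    (hppos : ∀ t, 0 < p t) (hqnn : ∀ t, 0 ≤ q t)
    (hu₁s : u₁ s = 0) (hu₁'s : u₁' s = 1 / p s)
    (hderiv₁ : ∀ t, HasDerivAt u₁ (u₁' t) t)
    (hODE₁ : ∀ t, HasDerivAt (fun τ => p τ * u₁' τ) (q t * u₁ t - a₁ * m t * u₁ t) t)
    (hu₂s : u₂ s = 0) (hu₂'s : u₂' s = 1 / p s)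
    (hderiv₂ : ∀ t, HasDerivAt u₂ (u₂' t) t)
    (hODE₂ : ∀ t, HasDerivAt (fun τ => p τ * u₂' τ) (q t * u₂ t - a₂ * m t * u₂ t) t)
    (ha₁ : 0 ≤ a₁) (ha : a₁ < a₂)
    (hne₁ : {t | s < t ∧ u₁ t = 0}.Nonempty) :
    {t | s < t ∧ u₂ t = 0}.Nonempty ∧
      sInf {t | s < t ∧ u₂ t = 0} < sInf {t | s < t ∧ u₁ t = 0} := by
  have hu₁'s_ne : u₁' s ≠ 0 := hu₁'s ▸ one_div_ne_zero (hppos s).ne'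
  have hu₂'s_ne : u₂' s ≠ 0 := hu₂'s ▸ one_div_ne_zero (hppos s).ne'
  have hsl₁ : ∀ t, HasDerivAt (fun τ => p τ * u₁' τ) ((q t - a₁ * m t) * u₁ t) t :=
    fun t => (hODE₁ t).congr_deriv (by ring)
  have hsl₂ : ∀ t, HasDerivAt (fun τ => p τ * u₂' τ) ((q t - a₂ * m t) * u₂ t) t :=
    fun t => (hODE₂ t).congr_deriv (by ring)
  obtain ⟨hsT, hu₁T⟩ := lt_sInf_and_eq_zero_of_eventually_ne
    (continuous_iff_continuousAt.2 fun t => (hderiv₁ t).continuousAt)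
    (((hderiv₁ s).eventually_ne hu₁'s_ne).filter_mono (nhdsGT_le_nhdsNE s)) hne₁
  have hweight := integral_mul_sq_pos_of_sturmLiouville hp hppos hq hqnn hm ha₁ hderiv₁ hsl₁
    hsT hu₁s hu₁T hu₁'s_ne
  have hQ₂ : Continuous fun t => q t - a₂ * m t := by fun_prop
  obtain ⟨t₀, ht₀, hu₂t₀⟩ := exists_zero_of_integral_sub_mul_sq_pos hp hppos hQ₂
    hderiv₁ hsl₁ hderiv₂ hsl₂ hsT hu₁s hu₁T hu₂s hu₂'s_ne (by
      simp_rw [show ∀ t, (q t - a₁ * m t - (q t - a₂ * m t)) * u₁ t ^ 2 =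
        (a₂ - a₁) * (m t * u₁ t ^ 2) from fun t => by ring, intervalIntegral.integral_const_mul]
      exact mul_pos (sub_pos.2 ha) hweight)
  have hbdd : BddBelow {t | s < t ∧ u₂ t = 0} := ⟨s, fun _ ht => ht.1.le⟩
  exact ⟨⟨t₀, ht₀.1, hu₂t₀⟩, (csInf_le hbdd ⟨ht₀.1, hu₂t₀⟩).trans_lt ht₀.2⟩
end

section
/- If m(t) ≤ 0 on the interval [s, T] and a ≥ 0, then any nontrivial solution u of -(p u')' + q u = a m u with u(s) = 0 has no zero in (s, T]; equivalently φ_a(s) > T. -/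
open Set Filter Topology

/-- If `u` has positive derivative at `x` and `u x ≥ 0`, then `u > 0` just to the right. -/
lemma aux_pos_right {u : ℝ → ℝ} {d x : ℝ} (h : HasDerivAt u d x) (hd : 0 < d)
    (hx : 0 ≤ u x) : ∀ᶠ t in 𝓝[>] x, 0 < u t := by
  have hs := hasDerivAt_iff_tendsto_slope.mp h
  have h1 : ∀ᶠ t in 𝓝[≠] x, 0 < slope u x t := hs.eventually (eventually_gt_nhds hd)
  have h2 : ∀ᶠ t in 𝓝[>] x, 0 < slope u x t :=
    h1.filter_mono (nhdsWithin_mono x (fun t ht => ne_of_gt ht))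
  filter_upwards [h2, self_mem_nhdsWithin] with t h3 (h4 : x < t)
  rw [slope_def_field] at h3
  have h5 : 0 < u t - u x := by
    have := mul_pos h3 (sub_pos.mpr h4)
    rwa [div_mul_cancel₀] at this
    exact (sub_pos.mpr h4).ne'
  linarith

/-- If `m ≤ 0` on `[s, T]` and `a ≥ 0`, then the nontrivial solution
of `-(p u')' + q u = a·m·u` with `u s = 0`, `u' s = 1/p s` has no zero in `(s, T]`;
equivalently `φ_a(s) > T`. -/
theorem no_zero_on_nonpositive_weight
    (p q m u u' : ℝ → ℝ) (a s T : ℝ)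
    (hp : Continuous p) (hq : Continuous q) (hm : Continuous m)
    (hppos : ∀ t, 0 < p t) (hqnn : ∀ t, 0 ≤ q t)
    (ha : 0 ≤ a)
    (hmneg : ∀ t ∈ Icc s T, m t ≤ 0)
    (hus : u s = 0) (hu's : u' s = 1 / p s)
    (hderiv : ∀ t, HasDerivAt u (u' t) t)
    (hODE : ∀ t, HasDerivAt (fun τ => p τ * u' τ) (q t * u t - a * m t * u t) t) :
    (∀ t ∈ Ioc s T, u t ≠ 0) ∧
      ({t | s < t ∧ u t = 0}.Nonempty → T < sInf {t | s < t ∧ u t = 0}) := by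
  set w : ℝ → ℝ := fun τ => p τ * u' τ with hw_def
  have hws : w s = 1 := by
    simp only [hw_def, hu's]
    exact mul_one_div_cancel (hppos s).ne'
  have hucont : Continuous u := by
    rw [continuous_iff_continuousAt]; exact fun t => (hderiv t).continuousAt
  have hwcont : Continuous w := by
    rw [continuous_iff_continuousAt]; exact fun t => (hODE t).continuousAt
  -- the closed set F of "good" points
  set F : Set ℝ := {τ | 0 ≤ u τ ∧ 1 ≤ w τ} with hF_def
  have hFclosed : IsClosed F := by
    have : F = u ⁻¹' (Ici 0) ∩ w ⁻¹' (Ici 1) := rfl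
    rw [this]
    exact (isClosed_Ici.preimage hucont).inter (isClosed_Ici.preimage hwcont)
  have hsF : s ∈ F := ⟨le_of_eq hus.symm, le_of_eq hws.symm⟩
  set S : Set ℝ := {t | Icc s t ⊆ F} with hS_def
  -- key: Icc s T ⊆ S
  have hSclosed : IsClosed (S ∩ Icc s T) := by
    apply IsSeqClosed.isClosed
    intro x l hx hl
    have hlIcc : l ∈ Icc s T := isClosed_Icc.mem_of_tendsto hl
      (Filter.Eventually.of_forall fun n => (hx n).2)
    refine ⟨fun τ hτ => ?_, hlIcc⟩
    rcases eq_or_lt_of_le hτ.2 with hτl | hτl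
    · subst hτl
      exact hFclosed.mem_of_tendsto hl (Filter.Eventually.of_forall fun n =>
        (hx n).1 ⟨(hx n).2.1, le_refl _⟩)
    · obtain ⟨n, hn⟩ := (hl.eventually (eventually_gt_nhds hτl)).exists
      exact (hx n).1 ⟨hτ.1, le_of_lt hn⟩
  have hkey : Icc s T ⊆ S := by
    apply hSclosed.Icc_subset_of_forall_exists_gt
    · intro τ hτ
      have : τ = s := le_antisymm hτ.2 hτ.1
      rwa [this]
    · rintro x ⟨hxS, hxs, hxT⟩ y (hy : x < y)
      have hxF : x ∈ F := hxS ⟨hxs, le_refl x⟩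
      have hu'x : 0 < u' x := by
        have h1 : (1 : ℝ) ≤ p x * u' x := hxF.2
        nlinarith [hppos x]
      obtain ⟨b, hb, hbsub⟩ := mem_nhdsGT_iff_exists_Ioo_subset.mp
        (aux_pos_right (hderiv x) hu'x hxF.1)
      set z : ℝ := min ((x + b) / 2) (min y T) with hz_def
      have hxz : x < z := by
        simp only [hz_def, lt_min_iff]
        exact ⟨by linarith [mem_Ioi.mp hb], hy, hxT⟩
      have hzT : z ≤ T := le_trans (min_le_right _ _) (min_le_right _ _)
      have hzy : z ≤ y := le_trans (min_le_right _ _) (min_le_left _ _)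
      have hzb : z < b := lt_of_le_of_lt (min_le_left _ _) (by linarith [mem_Ioi.mp hb])
      -- u ≥ 0 on Icc s z
      have hupos : ∀ τ ∈ Icc s z, 0 ≤ u τ := by
        intro τ hτ
        rcases le_or_gt τ x with h | h
        · exact (hxS ⟨hτ.1, h⟩).1
        · exact le_of_lt (hbsub ⟨h, lt_of_le_of_lt hτ.2 hzb⟩)
      -- w is monotone on Icc s z
      have hwmono : MonotoneOn w (Icc s z) := by
        apply monotoneOn_of_deriv_nonneg (convex_Icc s z) hwcont.continuousOn
        · exact fun t _ => (hODE t).differentiableAt.differentiableWithinAt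
        · intro t ht
          rw [interior_Icc] at ht
          rw [(hODE t).deriv]
          have htIcc : t ∈ Icc s T := ⟨le_of_lt ht.1, le_trans (le_of_lt ht.2) hzT⟩
          have hut : 0 ≤ u t := hupos t ⟨le_of_lt ht.1, le_of_lt ht.2⟩
          have hmt : m t ≤ 0 := hmneg t htIcc
          nlinarith [hqnn t, mul_nonneg (mul_nonneg ha (neg_nonneg.mpr hmt)) hut]
      refine ⟨z, ?_, hxz, hzy⟩
      intro τ hτ
      refine ⟨hupos τ hτ, ?_⟩
      calc (1 : ℝ) = w s := hws.symm
        _ ≤ w τ := hwmono ⟨le_refl s, le_trans hτ.1 hτ.2⟩ hτ hτ.1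
  -- all points of Icc s T are good
  have hgood : ∀ t ∈ Icc s T, 0 ≤ u t ∧ 1 ≤ w t := fun t ht =>
    hkey ht ⟨ht.1, le_refl t⟩
  -- strict positivity on Ioc s T
  have hpos : ∀ t ∈ Ioc s T, 0 < u t := by
    intro t ht
    have hmono : StrictMonoOn u (Icc s t) := by
      apply strictMonoOn_of_deriv_pos (convex_Icc s t) hucont.continuousOn
      intro τ hτ
      rw [interior_Icc] at hτ
      rw [(hderiv τ).deriv]
      have hτF := hgood τ ⟨le_of_lt hτ.1, le_trans (le_of_lt hτ.2) ht.2⟩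
      have h1 : (1 : ℝ) ≤ p τ * u' τ := hτF.2
      nlinarith [hppos τ]
    have := hmono ⟨le_refl s, le_of_lt ht.1⟩ ⟨le_of_lt ht.1, le_refl t⟩ ht.1
    rwa [hus] at this
  refine ⟨fun t ht => (hpos t ht).ne', ?_⟩
  -- part 2
  intro hne
  set Z : Set ℝ := {t | s < t ∧ u t = 0} with hZ_def
  have hZbdd : BddBelow Z := ⟨s, fun z hz => le_of_lt hz.1⟩
  have hcl : sInf Z ∈ closure Z := csInf_mem_closure hne hZbdd
  have hc0 : u (sInf Z) = 0 := by
    have : closure Z ⊆ u ⁻¹' {0} := closure_minimal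
      (fun z hz => hz.2) (isClosed_singleton.preimage hucont)
    exact this hcl
  have hcs : s ≤ sInf Z := by
    have : closure Z ⊆ Ici s := closure_minimal (fun z hz => le_of_lt hz.1) isClosed_Ici
    exact this hcl
  have hcs' : s < sInf Z := by
    rcases eq_or_lt_of_le hcs with h | h
    · -- zeros accumulate at s: contradiction with aux_pos_right at s
      exfalso
      have hu's' : 0 < u' s := by rw [hu's]; exact div_pos one_pos (hppos s)
      obtain ⟨b, hb, hbsub⟩ := mem_nhdsGT_iff_exists_Ioo_subset.mp
        (aux_pos_right (hderiv s) hu's' (le_of_eq hus.symm))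
      rw [← h] at hcl
      rw [Metric.mem_closure_iff] at hcl
      obtain ⟨z, hzZ, hzd⟩ := hcl (b - s) (by linarith [mem_Ioi.mp hb])
      have hzb : z < b := by
        rw [Real.dist_eq, abs_lt] at hzd
        linarith
      exact absurd hzZ.2 (hbsub ⟨hzZ.1, hzb⟩).ne'
    · exact h
  -- sInf Z is itself a zero > s, hence not in Ioc s T, hence > T
  have hcZ : sInf Z ∈ Z := ⟨hcs', hc0⟩
  by_contra hTc
  push_neg at hTc
  exact (hpos (sInf Z) ⟨hcs', hTc⟩).ne' hc0
end

section
/- Define α_s^> := inf { t > s : m(t) > 0 }. Then for each s, φ_a(s) → α_s^> as a → +∞: that is, for every ε > 0 there exists A such that for all a ≥ A, α_s^> < φ_a(s) ≤ α_s^> + ε (assuming α_s^> < +∞). -/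
open Set Filter Topology Real

/-!
While `t < α_s^>` we have `m t ≤ 0`, so `(p u')' = (q - a m) u` has a nonnegative coefficient:
`p u'` starts at `1`, stays positive, and `u` increases; hence `u > 0` on `(s, α_s^>]` and, by
continuity, slightly beyond. Conversely, there is an interval `[l, r] ⊆ (s, α_s^> + ε)`
on which `m ≥ c > 0`, so for large `a` the coefficient `q - a m` is `≤ -p₂ κ²` there, with
`κ = π / (r - l)`. As long as `u ≠ 0`, `ρ = p u' / u` solves the Riccati equation
`ρ' = q - a m - ρ² / p`, which makes the angle `arctan (ρ / (κ p₂))` decrease at rate at least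
`κ`; over `[l, r]` that is a drop of at least `π`, more than the range of `arctan` allows, so `u`
vanishes in `[l, r]`.
-/

lemma forall_mem_Icc_pos_of_forall_Ico_pos {f : ℝ → ℝ} {a b : ℝ}
    (hf : ContinuousOn f (Icc a b)) (ha : 0 < f a)
    (hstep : ∀ c ∈ Ioc a b, (∀ t ∈ Ico a c, 0 < f t) → 0 < f c) :
    ∀ t ∈ Icc a b, 0 < f t := by
  by_contra! ⟨t, ht, hft⟩
  set E := Icc a b ∩ f ⁻¹' Iic 0
  have hbdd : BddBelow E := ⟨a, fun t ht => ht.1.1⟩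
  have hcE : sInf E ∈ E :=
    (hf.preimage_isClosed_of_isClosed isClosed_Icc isClosed_Iic).csInf_mem ⟨t, ht, hft⟩ hbdd
  have hac : a < sInf E := hcE.1.1.lt_of_ne fun h => (h ▸ hcE.2 : f a ≤ 0).not_gt ha
  refine (hstep _ ⟨hac, hcE.1.2⟩ fun τ hτ => ?_).not_ge hcE.2
  by_contra! hfτ
  exact hτ.2.not_ge (csInf_le hbdd ⟨⟨hτ.1, hτ.2.le.trans hcE.1.2⟩, hfτ⟩)

lemma eventually_pos_nhdsGT_of_hasDerivAt {f : ℝ → ℝ} {f' x : ℝ} (hf : HasDerivAt f f' x)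
    (hf' : 0 < f') (hx : f x = 0) : ∀ᶠ t in 𝓝[>] x, 0 < f t := by
  have hslope := (hasDerivAt_iff_tendsto_slope.mp hf).eventually (eventually_gt_nhds hf')
  filter_upwards [nhdsGT_le_nhdsNE x hslope, self_mem_nhdsWithin] with t hslope_t ht
  exact pos_of_slope_pos ht hslope_t hx

section SturmLiouville

variable {p V u u' : ℝ → ℝ}

lemma pos_of_nonneg_potential {s T : ℝ} (hp : ∀ t ∈ Icc s T, 0 < p t)
    (hV : ∀ t ∈ Ioo s T, 0 ≤ V t) (hu : ∀ t ∈ Icc s T, HasDerivAt u (u' t) t)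
    (hv : ∀ t ∈ Icc s T, HasDerivAt (fun τ => p τ * u' τ) (V t * u t) t)
    (hus : u s = 0) (hu's : 0 < u' s) : ∀ t ∈ Ioc s T, 0 < u t := by
  intro t ht
  have hsT : s ≤ T := ht.1.le.trans ht.2
  have hmono : ∀ c ≤ T, (∀ t ∈ Ico s c, 0 < p t * u' t) → StrictMonoOn u (Icc s c) :=
    fun c hc hpos => strictMonoOn_of_deriv_pos (convex_Icc s c)
      (fun t ht => (hu t ⟨ht.1, ht.2.trans hc⟩).continuousAt.continuousWithinAt) fun t ht => by
        rw [interior_Icc] at ht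
        rw [(hu t ⟨ht.1.le, ht.2.le.trans hc⟩).deriv]
        exact (pos_iff_pos_of_mul_pos (hpos t ⟨ht.1.le, ht.2⟩)).mp
          (hp t ⟨ht.1.le, ht.2.le.trans hc⟩)
  have hv_pos : ∀ t ∈ Icc s T, 0 < p t * u' t := by
    refine forall_mem_Icc_pos_of_forall_Ico_pos
      (fun t ht => (hv t ht).continuousAt.continuousWithinAt)
      (mul_pos (hp s (left_mem_Icc.2 hsT)) hu's) fun c hc hpos => ?_
    have hu_nonneg : ∀ t ∈ Icc s c, 0 ≤ u t := fun t ht =>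
      hus ▸ (hmono c hc.2 hpos).monotoneOn (left_mem_Icc.2 hc.1.le) ht ht.1
    have hv_mono : MonotoneOn (fun τ => p τ * u' τ) (Icc s c) := by
      refine monotoneOn_of_deriv_nonneg (convex_Icc s c)
        (fun t ht => (hv t ⟨ht.1, ht.2.trans hc.2⟩).continuousAt.continuousWithinAt)
        (fun t ht => ?_) fun t ht => ?_ <;> rw [interior_Icc] at ht
      · exact (hv t ⟨ht.1.le, ht.2.le.trans hc.2⟩).differentiableAt.differentiableWithinAt
      · rw [(hv t ⟨ht.1.le, ht.2.le.trans hc.2⟩).deriv]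
        exact mul_nonneg (hV t ⟨ht.1, ht.2.trans_le hc.2⟩) (hu_nonneg t (Ioo_subset_Icc_self ht))
    exact (hpos s (left_mem_Ico.2 hc.1)).trans_le
      (hv_mono (left_mem_Icc.2 hc.1.le) (right_mem_Icc.2 hc.1.le) hc.1.le)
  exact hus ▸ hmono T le_rfl (fun t ht => hv_pos t (Ico_subset_Icc_self ht))
    (left_mem_Icc.2 hsT) (Ioc_subset_Icc_self ht) ht.1

lemma exists_gt_forall_pos_of_nonneg_potential {s T : ℝ} (hp : ∀ t, 0 < p t)
    (hV : ∀ t ∈ Ioo s T, 0 ≤ V t) (hu : ∀ t, HasDerivAt u (u' t) t)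
    (hv : ∀ t, HasDerivAt (fun τ => p τ * u' τ) (V t * u t) t)
    (hus : u s = 0) (hu's : 0 < u' s) (hsT : s ≤ T) :
    ∃ γ > T, ∀ t ∈ Ioc s γ, 0 < u t := by
  have hleft := pos_of_nonneg_potential (fun t _ => hp t) hV (fun t _ => hu t) (fun t _ => hv t)
    hus hu's
  have hright : ∀ᶠ t in 𝓝[>] T, 0 < u t := by
    rcases hsT.eq_or_lt with rfl | hsT
    · exact eventually_pos_nhdsGT_of_hasDerivAt (hu s) hu's hus
    · exact nhdsWithin_le_nhds
        ((hu T).continuousAt.eventually (lt_mem_nhds (hleft T ⟨hsT, le_rfl⟩)))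
  obtain ⟨γ, hTγ, hγ⟩ := mem_nhdsGT_iff_exists_Ioc_subset.mp hright
  refine ⟨γ, hTγ, fun t ht => ?_⟩
  rcases le_or_gt t T with htT | hTt
  · exact hleft t ⟨ht.1, htT⟩
  · exact hγ ⟨hTt, ht.2⟩

lemma hasDerivAt_riccati {t : ℝ} (hut : u t ≠ 0) (hu : HasDerivAt u (u' t) t)
    (hv : HasDerivAt (fun τ => p τ * u' τ) (V t * u t) t) :
    HasDerivAt (fun τ => p τ * u' τ / u τ) (V t - (p t * u' t / u t) ^ 2 / p t) t := by
  refine (hv.div hu hut).congr_deriv ?_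
  field_simp

lemma one_div_one_add_sq_mul_div_le {x D κ p₂ : ℝ} (hκ : 0 < κ) (hp₂ : 0 < p₂)
    (hD : D ≤ -(p₂ * κ ^ 2 + x ^ 2 / p₂)) :
    1 / (1 + (x / (κ * p₂)) ^ 2) * (D / (κ * p₂)) ≤ -κ := by
  have hσ : 0 < κ * p₂ := mul_pos hκ hp₂
  rw [show 1 / (1 + (x / (κ * p₂)) ^ 2) * (D / (κ * p₂))
      = D * (κ * p₂) / ((κ * p₂) ^ 2 + x ^ 2) by field_simp, div_le_iff₀ (by positivity)]
  calc D * (κ * p₂) ≤ -(p₂ * κ ^ 2 + x ^ 2 / p₂) * (κ * p₂) :=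
        mul_le_mul_of_nonneg_right hD hσ.le
    _ = -κ * ((κ * p₂) ^ 2 + x ^ 2) := by field_simp

theorem exists_zero_of_le_neg_sq {p₂ κ l r : ℝ} (hp : ∀ t ∈ Icc l r, 0 < p t)
    (hpu : ∀ t ∈ Icc l r, p t ≤ p₂) (hκ : 0 < κ) (hV : ∀ t ∈ Icc l r, V t ≤ -(p₂ * κ ^ 2))
    (hlen : π ≤ κ * (r - l)) (hu : ∀ t ∈ Icc l r, HasDerivAt u (u' t) t)
    (hv : ∀ t ∈ Icc l r, HasDerivAt (fun τ => p τ * u' τ) (V t * u t) t) :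
    ∃ t ∈ Icc l r, u t = 0 := by
  by_contra! hne
  have hlr : l < r := by nlinarith [pi_pos]
  have hp₂ : 0 < p₂ := (hp l (left_mem_Icc.2 hlr.le)).trans_le (hpu l (left_mem_Icc.2 hlr.le))
  set ρ := fun τ => p τ * u' τ / u τ
  have hθ : ∀ t ∈ Icc l r, HasDerivAt (fun τ => arctan (ρ τ / (κ * p₂)))
      (1 / (1 + (ρ t / (κ * p₂)) ^ 2) * ((V t - ρ t ^ 2 / p t) / (κ * p₂))) t := fun t ht =>
    (hasDerivAt_arctan _).comp t
      ((hasDerivAt_riccati (hne t ht) (hu t ht) (hv t ht)).div_const (κ * p₂))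
  obtain ⟨c, hc, hslope⟩ := exists_hasDerivAt_eq_slope _ _ hlr
    (fun t ht => (hθ t ht).continuousAt.continuousWithinAt)
    fun t ht => hθ t (Ioo_subset_Icc_self ht)
  have hc' := Ioo_subset_Icc_self hc
  have hρp : ρ c ^ 2 / p₂ ≤ ρ c ^ 2 / p c :=
    div_le_div_of_nonneg_left (sq_nonneg _) (hp c hc') (hpu c hc')
  have hderiv := one_div_one_add_sq_mul_div_le hκ hp₂ (x := ρ c)
    (D := V c - ρ c ^ 2 / p c) (by linarith [hV c hc'])
  rw [hslope, div_le_iff₀ (sub_pos.2 hlr)] at hderiv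
  linarith [arctan_lt_pi_div_two (ρ l / (κ * p₂)),
    neg_pi_div_two_lt_arctan (ρ r / (κ * p₂))]

end SturmLiouville

lemma exists_Icc_le_lt_csInf_add {m : ℝ → ℝ} (hm : Continuous m) {s ε : ℝ}
    (hα : {t | s < t ∧ 0 < m t}.Nonempty) (hε : 0 < ε) :
    ∃ c > 0, ∃ l r, s < l ∧ l < r ∧ r < sInf {t | s < t ∧ 0 < m t} + ε ∧
      ∀ t ∈ Icc l r, c ≤ m t := by
  obtain ⟨t₀, ⟨hst₀, hmt₀⟩, ht₀⟩ := exists_lt_of_csInf_lt hα (lt_add_of_pos_right _ hε)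
  have hU : {t | s < t ∧ m t₀ / 2 < m t ∧ t < sInf {t | s < t ∧ 0 < m t} + ε} ∈ 𝓝 t₀ :=
    (lt_mem_nhds hst₀).and
      ((hm.continuousAt.eventually (lt_mem_nhds (half_lt_self hmt₀))).and (gt_mem_nhds ht₀))
  obtain ⟨δ, hδ, hball⟩ := Metric.nhds_basis_closedBall.mem_iff.mp hU
  rw [Real.closedBall_eq_Icc] at hball
  exact ⟨m t₀ / 2, half_pos hmt₀, t₀ - δ, t₀ + δ, (hball (left_mem_Icc.2 (by linarith))).1,
    by linarith, (hball (right_mem_Icc.2 (by linarith))).2.2, fun t ht => (hball ht).2.1.le⟩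

theorem zero_function_tendsto_alpha_general
    (p q m : ℝ → ℝ) (u u' : ℝ → ℝ → ℝ) (s p₁ p₂ q₂ : ℝ)
    (hm : Continuous m)
    (hp₁ : 0 < p₁) (hpl : ∀ t, p₁ ≤ p t) (hpu : ∀ t, p t ≤ p₂)
    (hqnn : ∀ t, 0 ≤ q t) (hq₂ : ∀ t, q t ≤ q₂)
    (hsol : ∀ a, u a s = 0 ∧ u' a s = 1 / p s ∧
      ∀ t, HasDerivAt (u a) (u' a t) t ∧
        HasDerivAt (fun τ => p τ * u' a τ) (q t * u a t - a * m t * u a t) t)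
    (hα : {t | s < t ∧ 0 < m t}.Nonempty) :
    ∀ ε > 0, ∃ A : ℝ, ∀ a ≥ A,
      {t | s < t ∧ u a t = 0}.Nonempty ∧
      sInf {t | s < t ∧ 0 < m t} < sInf {t | s < t ∧ u a t = 0} ∧
      sInf {t | s < t ∧ u a t = 0} ≤ sInf {t | s < t ∧ 0 < m t} + ε := by
  intro ε hε
  have hp : ∀ t, 0 < p t := fun t => hp₁.trans_le (hpl t)
  obtain ⟨c, hc, l, r, hsl, hlr, hrα, hmc⟩ := exists_Icc_le_lt_csInf_add hm hα hε
  set κ := π / (r - l)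
  refine ⟨max 0 ((q₂ + p₂ * κ ^ 2) / c), fun a ha => ?_⟩
  have ha₀ : 0 ≤ a := (le_max_left _ _).trans ha
  have haκ : q₂ + p₂ * κ ^ 2 ≤ a * c := (div_le_iff₀ hc).mp ((le_max_right _ _).trans ha)
  obtain ⟨hus, hu's, hsol_a⟩ := hsol a
  have hv : ∀ t, HasDerivAt (fun τ => p τ * u' a τ) ((q t - a * m t) * u a t) t :=
    fun t => (hsol_a t).2.congr_deriv (by ring)
  obtain ⟨z, hz, hz0⟩ := exists_zero_of_le_neg_sq (fun t _ => hp t) (fun t _ => hpu t)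
    (div_pos pi_pos (sub_pos.2 hlr)) (fun t ht => by nlinarith [hq₂ t, hmc t ht])
    (div_mul_cancel₀ π (sub_pos.2 hlr).ne').ge (fun t _ => (hsol_a t).1) fun t _ => hv t
  have hbdd : BddBelow {t | s < t ∧ 0 < m t} := ⟨s, fun _ h => h.1.le⟩
  have hm_nonpos : ∀ t ∈ Ioo s (sInf {t | s < t ∧ 0 < m t}), m t ≤ 0 := fun t ht =>
    not_lt.mp fun hmt => ht.2.not_ge (csInf_le hbdd ⟨ht.1, hmt⟩)
  obtain ⟨γ, hαγ, hγ⟩ := exists_gt_forall_pos_of_nonneg_potential hp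
    (fun t ht => by nlinarith [hqnn t, mul_nonneg ha₀ (neg_nonneg.2 (hm_nonpos t ht))])
    (fun t => (hsol_a t).1) hv hus (hu's ▸ one_div_pos.2 (hp s))
    (le_csInf hα fun t ht => ht.1.le)
  have hzZ : z ∈ {t | s < t ∧ u a t = 0} := ⟨hsl.trans_le hz.1, hz0⟩
  refine ⟨⟨z, hzZ⟩, hαγ.trans_le (le_csInf ⟨z, hzZ⟩ fun b hb => ?_),
    (csInf_le ⟨s, fun _ h => h.1.le⟩ hzZ).trans (hz.2.trans hrα.le)⟩
  by_contra! hbγ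
  exact (hγ b ⟨hb.1, hbγ.le⟩).ne' hb.2

/-- With `α_s^> := inf {t > s : m t > 0}` finite, the zero-function
satisfies `φ_a(s) → α_s^>` as `a → +∞`: for every `ε > 0` there is `A` such that
`α_s^> < φ_a(s) ≤ α_s^> + ε` for all `a ≥ A`.  Here `u a` is the solution of
`-(p u')' + q u = a·m·u` with `u a s = 0`, `(u a)' s = 1/p s`. -/
theorem zero_function_tendsto_alpha
    (p q m : ℝ → ℝ) (u u' : ℝ → ℝ → ℝ) (s p₁ p₂ q₂ M : ℝ)
    (hp : Continuous p) (hq : Continuous q) (hm : Continuous m)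
    (hp₁ : 0 < p₁) (hpl : ∀ t, p₁ ≤ p t) (hpu : ∀ t, p t ≤ p₂)
    (hqnn : ∀ t, 0 ≤ q t) (hq₂ : ∀ t, q t ≤ q₂)
    (hmb : ∀ t, |m t| ≤ M)
    (hsol : ∀ a, u a s = 0 ∧ u' a s = 1 / p s ∧
      ∀ t, HasDerivAt (u a) (u' a t) t ∧
        HasDerivAt (fun τ => p τ * u' a τ) (q t * u a t - a * m t * u a t) t)
    (hα : {t | s < t ∧ 0 < m t}.Nonempty) :
    ∀ ε > 0, ∃ A : ℝ, ∀ a ≥ A,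
      {t | s < t ∧ u a t = 0}.Nonempty ∧
      sInf {t | s < t ∧ 0 < m t} < sInf {t | s < t ∧ u a t = 0} ∧
      sInf {t | s < t ∧ u a t = 0} ≤ sInf {t | s < t ∧ 0 < m t} + ε :=
  zero_function_tendsto_alpha_general p q m u u' s p₁ p₂ q₂ hm hp₁ hpl hpu hqnn hq₂ hsol hα
end

section
/- The set D := { (a, s) ∈ ℝ² : φ_a(s) < +∞ } is open, and φ : D → ℝ, (a,s) ↦ φ_a(s), is continuous (in fact C¹). -/
open Set Filter Topology

/-- `u c s` is the solution of `-(p·u')' + q·u = c·w·u` with `u c s s = 0` and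
`(u c s)' s = 1/(p s)`; `u'` is its `t`-derivative. -/
def IsSolFamily (p q w : ℝ → ℝ) (u u' : ℝ → ℝ → ℝ → ℝ) : Prop :=
  ∀ c s : ℝ, u c s s = 0 ∧ u' c s s = 1 / p s ∧
    ∀ t : ℝ, HasDerivAt (u c s) (u' c s t) t ∧
      HasDerivAt (fun τ => p τ * u' c s τ) (q t * u c s t - c * w t * u c s t) t

/-- Zero set of `u c s` strictly after `s`. -/
def zeroSet (u : ℝ → ℝ → ℝ → ℝ) (c s : ℝ) : Set ℝ := {t | s < t ∧ u c s t = 0}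

/-! The first zero `T` of `u(·; a, s)` after `s` is simple: a double zero would make `(u, p u')`,
a solution of a linear first-order system, vanish at `T` and hence at `s`, contradicting
`p(s) u'(s) = 1`. So `u(·; a, s)` is positive on `(s, T)` and negative just after `T`. Both facts
survive small perturbations of `(a, s)`: positivity just after the starting point because
`u'(s; a, s) = 1 / p(s) > 0` and `u'` is jointly continuous, positivity on compact subintervals
of `(s, T)` and negativity at a fixed point after `T` by joint continuity of `u`. The intermediate
value theorem then traps the first zero of the perturbed solution near `T`. -/

theorem HasDerivAt.eventually_neg_nhdsGT_of_eventually_pos_nhdsLT {f : ℝ → ℝ} {f' x : ℝ}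
    (hf : HasDerivAt f f' x) (hfx : f x = 0) (hf' : f' ≠ 0)
    (hpos : ∀ᶠ t in 𝓝[<] x, 0 < f t) : ∀ᶠ t in 𝓝[>] x, f t < 0 := by
  obtain ⟨hleft, hright⟩ := hasDerivAt_iff_tendsto_slope_left_right.1 hf
  have hf'_nonpos : f' ≤ 0 := by
    refine le_of_tendsto hleft ?_
    filter_upwards [hpos, self_mem_nhdsWithin] with t ht htx
    rw [slope_def_field, hfx, sub_zero]
    exact div_nonpos_of_nonneg_of_nonpos ht.le (sub_nonpos.2 (le_of_lt htx))
  filter_upwards [hright.eventually (gt_mem_nhds (lt_of_le_of_ne hf'_nonpos hf')),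
    self_mem_nhdsWithin] with t ht htx
  rw [slope_def_field, hfx, sub_zero] at ht
  exact ((div_neg_iff.1 ht).resolve_left fun h => h.2.not_gt (sub_pos.2 htx)).1

def zerosAfter (f : ℝ → ℝ) (σ : ℝ) : Set ℝ := {t | σ < t ∧ f t = 0}

theorem sInf_zerosAfter_spec {f : ℝ → ℝ} (hf : Continuous f) {σ b : ℝ} (hσb : σ < b)
    (hstart : ∀ t ∈ Ioc σ b, 0 < f t) (hne : (zerosAfter f σ).Nonempty) :
    b < sInf (zerosAfter f σ) ∧ f (sInf (zerosAfter f σ)) = 0 ∧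
      ∀ t ∈ Ioo σ (sInf (zerosAfter f σ)), 0 < f t := by
  set Z := zerosAfter f σ
  have hZ : ∀ t ∈ Z, b < t := fun t ht =>
    not_le.1 fun htb => (hstart t ⟨ht.1, htb⟩).ne' ht.2
  have hbdd : BddBelow Z := ⟨b, fun t ht => (hZ t ht).le⟩
  have hT0 : f (sInf Z) = 0 :=
    closure_minimal (fun t ht => ht.2) (isClosed_eq hf continuous_const)
      (csInf_mem_closure hne hbdd)
  have hbT : b < sInf Z := by
    refine lt_of_le_of_ne (le_csInf hne fun t ht => (hZ t ht).le) fun hb => ?_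
    exact (hstart b ⟨hσb, le_rfl⟩).ne' (hb ▸ hT0)
  refine ⟨hbT, hT0, fun t ht => ?_⟩
  by_contra! hft
  have hbt : b < t := not_le.1 fun htb => (hft.trans_lt (hstart t ⟨ht.1, htb⟩)).false
  obtain ⟨z, hz, hz0⟩ := intermediate_value_Icc' hbt.le hf.continuousOn
    ⟨hft, (hstart b ⟨hσb, le_rfl⟩).le⟩
  exact (csInf_le hbdd ⟨hσb.trans_le hz.1, hz0⟩).not_gt (hz.2.trans_lt ht.2)

section FirstZero

variable {X : Type*} [TopologicalSpace X] {g : X → ℝ → ℝ} {σ : X → ℝ} {x₀ : X} {b T : ℝ}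

theorem eventually_forall_mem_zerosAfter_gt (hg : Continuous (Function.uncurry g))
    (hstart : ∀ᶠ x in 𝓝 x₀, σ x < b ∧ ∀ t ∈ Ioc (σ x) b, 0 < g x t)
    (hpos : ∀ t ∈ Ioo (σ x₀) T, 0 < g x₀ t) {t₂ : ℝ} (ht₂ : t₂ < T) :
    ∀ᶠ x in 𝓝 x₀, ∀ t ∈ zerosAfter (g x) (σ x), t₂ < t := by
  have hK : ∀ᶠ x in 𝓝 x₀, ∀ t ∈ Icc b t₂, 0 < g x t :=
    isCompact_Icc.eventually_forall_of_forall_eventually fun t ht =>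
      hg.continuousAt.eventually (lt_mem_nhds
        (hpos t ⟨hstart.self_of_nhds.1.trans_le ht.1, ht.2.trans_lt ht₂⟩))
  filter_upwards [hstart, hK] with x ⟨_, hx⟩ hxK t ⟨hσt, ht0⟩
  by_contra! htt₂
  rcases le_or_gt t b with htb | hbt
  · exact (hx t ⟨hσt, htb⟩).ne' ht0
  · exact (hxK t ⟨hbt.le, htt₂⟩).ne' ht0

theorem eventually_exists_mem_zerosAfter_lt (hg : Continuous (Function.uncurry g))
    (hstart : ∀ᶠ x in 𝓝 x₀, σ x < b ∧ ∀ t ∈ Ioc (σ x) b, 0 < g x t)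
    (hT : σ x₀ < T) (hneg : ∃ᶠ t in 𝓝[>] T, g x₀ t < 0) {t₁ : ℝ} (ht₁ : T < t₁) :
    ∀ᶠ x in 𝓝 x₀, ∃ t ∈ zerosAfter (g x) (σ x), t < t₁ := by
  obtain ⟨t', ht'neg, ht'⟩ := (hneg.and_eventually (Ioo_mem_nhdsGT ht₁)).exists
  have hbt' : b < t' := not_le.1 fun h =>
    (hstart.self_of_nhds.2 t' ⟨hT.trans ht'.1, h⟩).not_gt ht'neg
  have hneg' : ∀ᶠ x in 𝓝 x₀, g x t' < 0 :=
    (hg.uncurry_right t').continuousAt.eventually (gt_mem_nhds ht'neg)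
  filter_upwards [hstart, hneg'] with x ⟨hσb, hx⟩ hxt'
  obtain ⟨t, ht, ht0⟩ := intermediate_value_Icc' hbt'.le (hg.uncurry_left x).continuousOn
    ⟨hxt'.le, (hx b ⟨hσb, le_rfl⟩).le⟩
  exact ⟨t, ⟨hσb.trans_le ht.1, ht0⟩, ht.2.trans_lt ht'.2⟩

theorem tendsto_sInf_zerosAfter (hg : Continuous (Function.uncurry g))
    (hstart : ∀ᶠ x in 𝓝 x₀, σ x < b ∧ ∀ t ∈ Ioc (σ x) b, 0 < g x t)
    (hT : σ x₀ < T) (hpos : ∀ t ∈ Ioo (σ x₀) T, 0 < g x₀ t)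
    (hneg : ∃ᶠ t in 𝓝[>] T, g x₀ t < 0) :
    (∀ᶠ x in 𝓝 x₀, (zerosAfter (g x) (σ x)).Nonempty) ∧
      Tendsto (fun x => sInf (zerosAfter (g x) (σ x))) (𝓝 x₀) (𝓝 T) := by
  have hne : ∀ᶠ x in 𝓝 x₀, (zerosAfter (g x) (σ x)).Nonempty := by
    filter_upwards [eventually_exists_mem_zerosAfter_lt hg hstart hT hneg (lt_add_one T)]
      with x ⟨t, ht, _⟩ using ⟨t, ht⟩
  refine ⟨hne, tendsto_order.2 ⟨fun t₂ ht₂ => ?_, fun t₁ ht₁ => ?_⟩⟩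
  · obtain ⟨t₃, ht₂₃, ht₃⟩ := exists_between ht₂
    filter_upwards [eventually_forall_mem_zerosAfter_gt hg hstart hpos ht₃, hne] with x hx hxne
    exact ht₂₃.trans_le (le_csInf hxne fun t ht => (hx t ht).le)
  · filter_upwards [eventually_exists_mem_zerosAfter_lt hg hstart hT hneg ht₁] with x ⟨t, ht, htt₁⟩
    exact (csInf_le ⟨σ x, fun t ht => ht.1.le⟩ ht).trans_lt htt₁

end FirstZero

theorem eqOn_zero_of_hasDerivAt_clm_apply {E : Type*} [NormedAddCommGroup E] [NormedSpace ℝ E]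
    {A : ℝ → E →L[ℝ] E} (hA : Continuous A) {f : ℝ → E} (hf : ∀ t, HasDerivAt f (A t (f t)) t)
    {a b : ℝ} (hb : f b = 0) : EqOn f 0 (Icc a b) := by
  obtain ⟨C, hC⟩ :=
    (isCompact_Icc (a := a) (b := b)).exists_bound_of_continuousOn hA.continuousOn
  refine ODE_solution_unique_of_mem_Icc_left (v := fun t => A t) (s := fun _ => univ)
    (K := C.toNNReal) (fun t ht => ?_)
    (continuous_iff_continuousAt.2 fun t => (hf t).continuousAt).continuousOn
    (fun t _ => (hf t).hasDerivWithinAt) (fun _ _ => mem_univ _) continuousOn_const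
    (fun t _ => by simpa [Pi.zero_def] using hasDerivWithinAt_const t (Iic t) (0 : E))
    (fun _ _ => mem_univ _) hb
  refine ((A t).lipschitz.weaken ?_).lipschitzOnWith
  rw [← NNReal.coe_le_coe, coe_nnnorm, Real.coe_toNNReal']
  exact (hC t (Ioc_subset_Icc_self ht)).trans (le_max_left _ _)

/-- The coefficient matrix of the first-order system satisfied by `(u, p u')`. -/
noncomputable def systemMatrix (p q w : ℝ → ℝ) (c t : ℝ) : ℝ × ℝ →L[ℝ] ℝ × ℝ :=
  ((p t)⁻¹ • ContinuousLinearMap.snd ℝ ℝ ℝ).prod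
    ((q t - c * w t) • ContinuousLinearMap.fst ℝ ℝ ℝ)

theorem continuous_systemMatrix {p q w : ℝ → ℝ} (hp : Continuous p) (hq : Continuous q)
    (hw : Continuous w) (hppos : ∀ t, 0 < p t) (c : ℝ) : Continuous (systemMatrix p q w c) :=
  (ContinuousLinearMap.prodₗᵢ ℝ).continuous.comp
    (((hp.inv₀ fun t => (hppos t).ne').smul continuous_const).prodMk
      ((hq.sub (continuous_const.mul hw)).smul continuous_const))

namespace IsSolFamily

variable {p q w : ℝ → ℝ} {u u' : ℝ → ℝ → ℝ → ℝ}

theorem continuous (h : IsSolFamily p q w u u') (c s : ℝ) : Continuous (u c s) :=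
  continuous_iff_continuousAt.2 fun t => ((h c s).2.2 t).1.continuousAt

theorem hasDerivAt_systemMatrix (h : IsSolFamily p q w u u') (hppos : ∀ t, 0 < p t)
    (c s t : ℝ) :
    HasDerivAt (fun τ => (u c s τ, p τ * u' c s τ))
      (systemMatrix p q w c t (u c s t, p t * u' c s t)) t := by
  convert ((h c s).2.2 t).1.prodMk ((h c s).2.2 t).2 using 1
  simp only [systemMatrix, ContinuousLinearMap.prod_apply, smul_apply,
    ContinuousLinearMap.coe_snd', ContinuousLinearMap.coe_fst', smul_eq_mul, Prod.mk.injEq]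
  exact ⟨inv_mul_cancel_left₀ (hppos t).ne' _, by ring⟩

theorem deriv_ne_zero_of_eq_zero (h : IsSolFamily p q w u u') (hp : Continuous p)
    (hq : Continuous q) (hw : Continuous w) (hppos : ∀ t, 0 < p t) {c s t : ℝ} (hst : s ≤ t)
    (ht : u c s t = 0) : u' c s t ≠ 0 := by
  intro ht'
  have hs := eqOn_zero_of_hasDerivAt_clm_apply (continuous_systemMatrix hp hq hw hppos c)
    (h.hasDerivAt_systemMatrix hppos c s) (by simp [ht, ht']) ⟨le_rfl, hst⟩
  have : p s * u' c s s = 0 := congrArg Prod.snd hs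
  rw [(h c s).2.1, mul_one_div_cancel (hppos s).ne'] at this
  exact one_ne_zero this

theorem eventually_pos_near_start (h : IsSolFamily p q w u u') (hppos : ∀ t, 0 < p t)
    (hu' : Continuous fun x : ℝ × ℝ × ℝ => u' x.1 x.2.1 x.2.2) (a s : ℝ) :
    ∃ b, s < b ∧ ∀ᶠ z in 𝓝 (a, s), z.2 < b ∧ ∀ t ∈ Ioc z.2 b, 0 < u z.1 z.2 t := by
  have h0 : 0 < u' a s s := by rw [(h a s).2.1]; exact one_div_pos.2 (hppos s)
  obtain ⟨ε, hε, hball⟩ := Metric.eventually_nhds_iff.1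
    (hu'.continuousAt.eventually (lt_mem_nhds h0) :
      ∀ᶠ x in 𝓝 (a, s, s), 0 < u' x.1 x.2.1 x.2.2)
  refine ⟨s + ε / 2, by linarith, Metric.eventually_nhds_iff.2 ⟨ε / 2, half_pos hε, ?_⟩⟩
  rintro ⟨c, σ⟩ hz
  simp only [Prod.dist_eq, Real.dist_eq, max_lt_iff, abs_lt] at hz
  have hσb : σ < s + ε / 2 := by linarith
  have hderiv : ∀ τ ∈ Icc σ (s + ε / 2), 0 < u' c σ τ := fun τ hτ =>
    hball (y := (c, σ, τ)) <| by
    simp only [Prod.dist_eq, Real.dist_eq, max_lt_iff, abs_lt]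
    refine ⟨⟨?_, ?_⟩, ⟨?_, ?_⟩, ?_, ?_⟩ <;> linarith [hτ.1, hτ.2]
  have hmono : StrictMonoOn (u c σ) (Icc σ (s + ε / 2)) :=
    strictMonoOn_of_hasDerivWithinAt_pos (convex_Icc _ _) (h.continuous c σ).continuousOn
      (fun τ _ => ((h c σ).2.2 τ).1.hasDerivWithinAt)
      (fun τ hτ => hderiv τ (interior_subset hτ))
  refine ⟨hσb, fun t ht => ?_⟩
  simpa [(h c σ).1] using hmono (left_mem_Icc.2 hσb.le) ⟨ht.1.le, ht.2⟩ ht.1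

end IsSolFamily

theorem zero_function_domain_open_and_continuous_general
    (p q m : ℝ → ℝ) (u u' : ℝ → ℝ → ℝ → ℝ)
    (hp : Continuous p) (hq : Continuous q) (hm : Continuous m)
    (hppos : ∀ t, 0 < p t)
    (hsol : IsSolFamily p q m u u')
    (hu : Continuous fun x : ℝ × ℝ × ℝ => u x.1 x.2.1 x.2.2)
    (hu' : Continuous fun x : ℝ × ℝ × ℝ => u' x.1 x.2.1 x.2.2) :
    IsOpen {as : ℝ × ℝ | (zeroSet u as.1 as.2).Nonempty} ∧
      ContinuousOn (fun as : ℝ × ℝ => sInf (zeroSet u as.1 as.2))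
        {as : ℝ × ℝ | (zeroSet u as.1 as.2).Nonempty} := by
  have hg : Continuous (Function.uncurry fun z : ℝ × ℝ => u z.1 z.2) :=
    hu.comp (continuous_fst.fst.prodMk (continuous_fst.snd.prodMk continuous_snd))
  have key : ∀ z : ℝ × ℝ, (zeroSet u z.1 z.2).Nonempty →
      (∀ᶠ y in 𝓝 z, (zeroSet u y.1 y.2).Nonempty) ∧
        Tendsto (fun y : ℝ × ℝ => sInf (zeroSet u y.1 y.2)) (𝓝 z)
          (𝓝 (sInf (zeroSet u z.1 z.2))) := by
    rintro ⟨a, s⟩ hne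
    obtain ⟨b, hsb, hstart⟩ := hsol.eventually_pos_near_start hppos hu' a s
    obtain ⟨hbT, hT0, hpos⟩ :=
      sInf_zerosAfter_spec (hsol.continuous a s) hsb hstart.self_of_nhds.2 hne
    have hsT := hsb.trans hbT
    have hneg := ((hsol a s).2.2 _).1.eventually_neg_nhdsGT_of_eventually_pos_nhdsLT hT0
      (hsol.deriv_ne_zero_of_eq_zero hp hq hm hppos hsT.le hT0)
      (mem_of_superset (Ioo_mem_nhdsLT hsT) hpos)
    exact tendsto_sInf_zerosAfter hg hstart hsT hpos hneg.frequently
  exact ⟨isOpen_iff_mem_nhds.2 fun z hz => (key z hz).1,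
    fun z hz => ContinuousAt.continuousWithinAt (key z hz).2⟩

/-- The domain `D = {(a,s) : φ_a(s) < +∞}` is open and
`(a,s) ↦ φ_a(s)` is continuous on `D`. -/
theorem zero_function_domain_open_and_continuous
    (p q m : ℝ → ℝ) (u u' : ℝ → ℝ → ℝ → ℝ)
    (hp : Continuous p) (hq : Continuous q) (hm : Continuous m)
    (hppos : ∀ t, 0 < p t) (hqnn : ∀ t, 0 ≤ q t)
    (hsol : IsSolFamily p q m u u')
    (hu : Continuous fun x : ℝ × ℝ × ℝ => u x.1 x.2.1 x.2.2)
    (hu' : Continuous fun x : ℝ × ℝ × ℝ => u' x.1 x.2.1 x.2.2) :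
    IsOpen {as : ℝ × ℝ | (zeroSet u as.1 as.2).Nonempty} ∧
      ContinuousOn (fun as : ℝ × ℝ => sInf (zeroSet u as.1 as.2))
        {as : ℝ × ℝ | (zeroSet u as.1 as.2).Nonempty} :=
  zero_function_domain_open_and_continuous_general p q m u u' hp hq hm hppos hsol hu hu'
end

section
/- Let w(t) := ∂u(t; a, s)/∂a with a ≠ 0, where u(·;a,s) solves -(p u')' + q u = a m u, u(s)=0, u'(s)=1/p(s). Then w(s) = 0 and p(φ_a(s))·w(φ_a(s))·u'(φ_a(s)) = (1/a)∫_s^{φ_a(s)} p(t)u'(t)² dt + (1/a)∫_s^{φ_a(s)} q(t)u(t)² dt. In particular w(φ_a(s)) < 0 if a > 0 and w(φ_a(s)) > 0 if a < 0. -/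
/-!
Differentiating the Lagrange identity between `u(·; α)` and `u(·; a)` on `[s, φ]`, namely
`p(φ) u'(φ; a) u(φ; α) = (α - a) ∫ m u(·; α) u(·; a)`, at `α = a` gives
`p(φ) u'(φ) w(φ) = ∫ m u²`. Multiplying the equation by `u` and integrating by parts,
`a ∫ m u² = ∫ p u'² + ∫ q u²`, the boundary terms vanishing since `u(s) = u(φ) = 0`.
The right-hand side is positive because `u'(s) = 1 / p(s) > 0`, and `u'(φ) < 0` then fixes the
sign of `w(φ)`.
-/

open Set intervalIntegral
open Filter Topology
open MeasureTheory (volume)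

/-- `-(p y')' + q y = α m y`, as a first-order system for `y` and `y'`. -/
def IsSturmLiouvilleSolution (p q m : ℝ → ℝ) (α : ℝ) (y y' : ℝ → ℝ) : Prop :=
  ∀ t, HasDerivAt y (y' t) t ∧ HasDerivAt (fun τ => p τ * y' τ) (q t * y t - α * m t * y t) t

namespace IsSturmLiouvilleSolution

variable {p q m y y' z z' : ℝ → ℝ} {α β : ℝ}

theorem continuous (hy : IsSturmLiouvilleSolution p q m α y y') : Continuous y :=
  continuous_iff_continuousAt.2 fun t => (hy t).1.continuousAt

theorem continuous_deriv (hy : IsSturmLiouvilleSolution p q m α y y') (hp : Continuous p)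
    (hp0 : ∀ t, p t ≠ 0) : Continuous y' := by
  have hflux : Continuous fun t => p t * y' t :=
    continuous_iff_continuousAt.2 fun t => (hy t).2.continuousAt
  exact (hflux.div hp hp0).congr fun t => mul_div_cancel_left₀ _ (hp0 t)

theorem lagrange_identity (hy : IsSturmLiouvilleSolution p q m α y y')
    (hz : IsSturmLiouvilleSolution p q m β z z') (hm : Continuous m) (a b : ℝ) :
    p b * (y' b * z b - z' b * y b) - p a * (y' a * z a - z' a * y a) =
      (β - α) * ∫ t in a..b, m t * y t * z t := by
  have hderiv : ∀ t, HasDerivAt (fun τ => p τ * y' τ * z τ - p τ * z' τ * y τ)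
      ((β - α) * (m t * y t * z t)) t := fun t =>
    (((hy t).2.mul (hz t).1).sub ((hz t).2.mul (hy t).1)).congr_deriv (by ring)
  rw [← integral_const_mul, integral_eq_sub_of_hasDerivAt (fun t _ => hderiv t)
    ((continuous_const.mul ((hm.mul hy.continuous).mul hz.continuous)).intervalIntegrable _ _)]
  ring

theorem energy_identity (hy : IsSturmLiouvilleSolution p q m α y y') (hp : Continuous p)
    (hq : Continuous q) (hm : Continuous m) (hy' : Continuous y') (a b : ℝ) :
    p b * y' b * y b - p a * y' a * y a =
      (∫ t in a..b, p t * y' t ^ 2) + (∫ t in a..b, q t * y t ^ 2) -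
        α * ∫ t in a..b, m t * y t ^ 2 := by
  have hderiv : ∀ t, HasDerivAt (fun τ => p τ * y' τ * y τ)
      (p t * y' t ^ 2 + q t * y t ^ 2 - α * (m t * y t ^ 2)) t := fun t =>
    ((hy t).2.mul (hy t).1).congr_deriv (by ring)
  have hkin : IntervalIntegrable (fun t => p t * y' t ^ 2) volume a b :=
    (hp.mul (hy'.pow 2)).intervalIntegrable _ _
  have hpot : IntervalIntegrable (fun t => q t * y t ^ 2) volume a b :=
    (hq.mul (hy.continuous.pow 2)).intervalIntegrable _ _
  have hweight : IntervalIntegrable (fun t => α * (m t * y t ^ 2)) volume a b :=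
    (continuous_const.mul (hm.mul (hy.continuous.pow 2))).intervalIntegrable _ _
  rw [← integral_eq_sub_of_hasDerivAt (fun t _ => hderiv t) ((hkin.add hpot).sub hweight),
    integral_sub (hkin.add hpot) hweight, integral_add hkin hpot, integral_const_mul]

end IsSturmLiouvilleSolution

theorem HasDerivAt.eq_of_forall_eq_sub_mul {g H : ℝ → ℝ} {g' a : ℝ} (hg : HasDerivAt g g' a)
    (hH : ContinuousAt H a) (hgH : ∀ α, g α = (α - a) * H α) : g' = H a := by
  refine tendsto_nhds_unique ((hasDerivAt_iff_tendsto_slope.1 hg).congr' ?_)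
    (hH.tendsto.mono_left nhdsWithin_le_nhds)
  filter_upwards [self_mem_nhdsWithin] with α (hα : α ≠ a)
  rw [slope_def_field, hgH, hgH, sub_self, zero_mul, sub_zero,
    mul_div_cancel_left₀ _ (sub_ne_zero.2 hα)]

theorem mul_hasDerivAt_param_eq_integral_weight_sq {p q m : ℝ → ℝ} {u u' : ℝ → ℝ → ℝ}
    {a s b wb : ℝ} (hm : Continuous m)
    (hsol : ∀ α, IsSturmLiouvilleSolution p q m α (u α) (u' α)) (hs : ∀ α, u α s = 0)
    (hu : Continuous fun x : ℝ × ℝ => u x.1 x.2) (hw : HasDerivAt (fun α => u α b) wb a)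
    (hb : u a b = 0) :
    p b * u' a b * wb = ∫ t in s..b, m t * u a t ^ 2 := by
  have hH : Continuous fun α => ∫ t in s..b, m t * u α t * u a t :=
    continuous_parametric_intervalIntegral_of_continuous'
      (((hm.comp continuous_snd).mul hu).mul ((hsol a).continuous.comp continuous_snd)) s b
  have hlim := (hw.const_mul (p b * u' a b)).eq_of_forall_eq_sub_mul hH.continuousAt fun α => by
    have h := (hsol α).lagrange_identity (hsol a) hm s b
    simp only [hb, hs] at h
    linear_combination -h
  simpa only [sq, mul_assoc] using hlim

theorem csInf_zeros_Ioi_mem {f : ℝ → ℝ} {f' s : ℝ} (hf : Continuous f) (hd : HasDerivAt f f' s)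
    (hf' : f' ≠ 0) (hne : {t | s < t ∧ f t = 0}.Nonempty) :
    sInf {t | s < t ∧ f t = 0} ∈ {t | s < t ∧ f t = 0} := by
  obtain ⟨c, hsc, hc⟩ : ∃ c ∈ Ioi s, Ioo s c ⊆ {t | f t ≠ 0} :=
    mem_nhdsGT_iff_exists_Ioo_subset.1 <|
      (hd.eventually_ne hf').filter_mono (nhdsWithin_mono s fun t ht => ne_of_gt ht)
  have hS : {t | s < t ∧ f t = 0} = Ici c ∩ f ⁻¹' {0} := by
    ext t
    constructor
    · rintro ⟨hst, hft⟩
      exact ⟨not_lt.1 fun htc => hc ⟨hst, htc⟩ hft, hft⟩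
    · rintro ⟨hct, hft⟩
      exact ⟨lt_of_lt_of_le hsc hct, hft⟩
  rw [hS] at hne ⊢
  exact (isClosed_Ici.inter (isClosed_singleton.preimage hf)).csInf_mem hne ⟨c, fun t ht => ht.1⟩

theorem derivative_in_a_properties_general
    (p q m : ℝ → ℝ) (a s : ℝ) (u u' : ℝ → ℝ → ℝ) (w : ℝ → ℝ)
    (hp : Continuous p) (hq : Continuous q) (hm : Continuous m)
    (hppos : ∀ t, 0 < p t) (hqnn : ∀ t, 0 ≤ q t) (ha : a ≠ 0)
    (hsol : ∀ α : ℝ, u α s = 0 ∧ u' α s = 1 / p s ∧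
      ∀ t, HasDerivAt (u α) (u' α t) t ∧
        HasDerivAt (fun τ => p τ * u' α τ) (q t * u α t - α * m t * u α t) t)
    (hu : Continuous fun x : ℝ × ℝ => u x.1 x.2)
    (hw : ∀ t, HasDerivAt (fun α => u α t) (w t) a)
    (hne : {t | s < t ∧ u a t = 0}.Nonempty)
    (hderφ : u' a (sInf {t | s < t ∧ u a t = 0}) < 0) :
    w s = 0 ∧
      (p (sInf {t | s < t ∧ u a t = 0}) * w (sInf {t | s < t ∧ u a t = 0}) *
          u' a (sInf {t | s < t ∧ u a t = 0}) =
        (1 / a) * (∫ t in s..(sInf {t | s < t ∧ u a t = 0}), p t * (u' a t) ^ 2) +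
        (1 / a) * (∫ t in s..(sInf {t | s < t ∧ u a t = 0}), q t * (u a t) ^ 2)) ∧
      (0 < a → w (sInf {t | s < t ∧ u a t = 0}) < 0) ∧
      (a < 0 → 0 < w (sInf {t | s < t ∧ u a t = 0})) := by
  have hsols (α : ℝ) : IsSturmLiouvilleSolution p q m α (u α) (u' α) := (hsol α).2.2
  have hzero (α : ℝ) : u α s = 0 := (hsol α).1
  have hu's : 0 < u' a s := by rw [(hsol a).2.1]; exact one_div_pos.2 (hppos s)
  set φ := sInf {t | s < t ∧ u a t = 0}
  obtain ⟨hsφ, huφ⟩ : s < φ ∧ u a φ = 0 :=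
    csInf_zeros_Ioi_mem (hsols a).continuous (hsols a s).1 hu's.ne' hne
  have hws : w s = 0 := (hw s).unique <| by simpa only [hzero] using hasDerivAt_const a (0 : ℝ)
  have hcu' := (hsols a).continuous_deriv hp fun t => (hppos t).ne'
  have hweight := mul_hasDerivAt_param_eq_integral_weight_sq hm hsols hzero hu (hw φ) huφ
  have henergy := (hsols a).energy_identity hp hq hm hcu' s φ
  simp only [huφ, hzero, mul_zero, sub_zero] at henergy
  have hpos : 0 < (∫ t in s..φ, p t * u' a t ^ 2) + ∫ t in s..φ, q t * u a t ^ 2 :=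
    add_pos_of_pos_of_nonneg
      (integral_pos hsφ (hp.mul (hcu'.pow 2)).continuousOn
        (fun t _ => mul_nonneg (hppos t).le (sq_nonneg _))
        ⟨s, left_mem_Icc.2 hsφ.le, mul_pos (hppos s) (pow_pos hu's 2)⟩)
      (integral_nonneg hsφ.le fun t _ => mul_nonneg (hqnn t) (sq_nonneg _))
  have hmain : a * (p φ * u' a φ * w φ) =
      (∫ t in s..φ, p t * u' a t ^ 2) + ∫ t in s..φ, q t * u a t ^ 2 := by
    rw [hweight]; linarith
  have hpu' : p φ * u' a φ < 0 := mul_neg_of_pos_of_neg (hppos φ) hderφ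
  refine ⟨hws, ?_, fun hapos => ?_, fun haneg => ?_⟩
  · field_simp
    linear_combination hmain
  · exact neg_of_mul_pos_right (pos_of_mul_pos_right (hmain ▸ hpos) hapos.le) hpu'.le
  · exact pos_of_mul_neg_right (neg_of_mul_pos_right (hmain ▸ hpos) haneg.le) hpu'.le

/-- Let `w(t) = ∂u(t;a,s)/∂a` with `a ≠ 0`, where `u α` solves
`-(p u')' + q u = α·m·u` with `u α s = 0`, `(u α)' s = 1/p s`. Writing
`φ = φ_a(s)` for the first zero of `u a` after `s` (with `(u a)'(φ) < 0`), one has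
`w s = 0`, the integral identity
`p(φ)·w(φ)·u'(φ) = (1/a)∫_s^φ p u'² + (1/a)∫_s^φ q u²`,
and in particular `w(φ) < 0` if `a > 0` and `w(φ) > 0` if `a < 0`. -/
theorem derivative_in_a_properties
    (p q m : ℝ → ℝ) (a s : ℝ) (u u' : ℝ → ℝ → ℝ) (w : ℝ → ℝ)
    (hp : Continuous p) (hq : Continuous q) (hm : Continuous m)
    (hppos : ∀ t, 0 < p t) (hqnn : ∀ t, 0 ≤ q t) (ha : a ≠ 0)
    (hsol : ∀ α : ℝ, u α s = 0 ∧ u' α s = 1 / p s ∧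
      ∀ t, HasDerivAt (u α) (u' α t) t ∧
        HasDerivAt (fun τ => p τ * u' α τ) (q t * u α t - α * m t * u α t) t)
    (hu : Continuous fun x : ℝ × ℝ => u x.1 x.2)
    (hu' : Continuous fun x : ℝ × ℝ => u' x.1 x.2)
    (hw : ∀ t, HasDerivAt (fun α => u α t) (w t) a)
    (hne : {t | s < t ∧ u a t = 0}.Nonempty)
    (hderφ : u' a (sInf {t | s < t ∧ u a t = 0}) < 0) :
    w s = 0 ∧
      (p (sInf {t | s < t ∧ u a t = 0}) * w (sInf {t | s < t ∧ u a t = 0}) *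
          u' a (sInf {t | s < t ∧ u a t = 0}) =
        (1 / a) * (∫ t in s..(sInf {t | s < t ∧ u a t = 0}), p t * (u' a t) ^ 2) +
        (1 / a) * (∫ t in s..(sInf {t | s < t ∧ u a t = 0}), q t * (u a t) ^ 2)) ∧
      (0 < a → w (sInf {t | s < t ∧ u a t = 0}) < 0) ∧
      (a < 0 → 0 < w (sInf {t | s < t ∧ u a t = 0})) :=
  derivative_in_a_properties_general p q m a s u u' w hp hq hm hppos hqnn ha hsol hu hw hne hderφ
end

section
/- Suppose m⁺ ≢ 0 and n⁺ ≢ 0 on (T₁, T₂). Then C₂^{>++} or C₂^{<++} is nonempty. More precisely, setting α := inf{ t > T₁ : m(t) > 0 } and β := inf{ t > T₁ : n(t) > 0 }, if α ≤ β then C₂^{>++} ≠ ∅, and if β < α then C₂^{<++} ≠ ∅. -/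
open Set Filter Classical

noncomputable section

/-- The zero-function `φ_c(s)`, valued in `EReal` (equal to `⊤` when `u c s`
never vanishes after `s`). -/
noncomputable def phiE (u : ℝ → ℝ → ℝ → ℝ) (c s : ℝ) : EReal :=
  if (zeroSet u c s).Nonempty then ((sInf (zeroSet u c s) : ℝ) : EReal) else ⊤

/-- The zero-function as a map `EReal → EReal` (`⊤` propagates). -/
noncomputable def phiStep (u : ℝ → ℝ → ℝ → ℝ) (c : ℝ) (x : EReal) : EReal :=
  if x = ⊤ ∨ x = ⊥ then ⊤ else phiE u c x.toReal

/-- `Φ_k^>(a,b)`: composition of `k` alternating zero-functions `φ_a^m, φ_b^n`,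
starting with `φ_a^m`. -/
noncomputable def PhiGt (uM uN : ℝ → ℝ → ℝ → ℝ) (a b : ℝ) : ℕ → EReal → EReal
  | 0 => id
  | k + 1 => (if k % 2 = 0 then phiStep uM a else phiStep uN b) ∘ PhiGt uM uN a b k

/-- `Φ_k^<(a,b)`: composition of `k` alternating zero-functions, starting with
`φ_b^n`. -/
noncomputable def PhiLt (uM uN : ℝ → ℝ → ℝ → ℝ) (a b : ℝ) : ℕ → EReal → EReal
  | 0 => id
  | k + 1 => (if k % 2 = 0 then phiStep uN b else phiStep uM a) ∘ PhiLt uM uN a b k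

/-- `C_k^{>++} = {(a,b) ∈ ℝ⁺×ℝ⁺ : Φ_k^>(a,b)(T₁) = T₂}`. -/
def CGt (uM uN : ℝ → ℝ → ℝ → ℝ) (T₁ T₂ : ℝ) (k : ℕ) : Set (ℝ × ℝ) :=
  {ab | 0 < ab.1 ∧ 0 < ab.2 ∧ PhiGt uM uN ab.1 ab.2 k (T₁ : EReal) = (T₂ : EReal)}

/-- `C_k^{<++} = {(a,b) ∈ ℝ⁺×ℝ⁺ : Φ_k^<(a,b)(T₁) = T₂}`. -/
def CLt (uM uN : ℝ → ℝ → ℝ → ℝ) (T₁ T₂ : ℝ) (k : ℕ) : Set (ℝ × ℝ) :=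
  {ab | 0 < ab.1 ∧ 0 < ab.2 ∧ PhiLt uM uN ab.1 ab.2 k (T₁ : EReal) = (T₂ : EReal)}

/-!
Write `φ_c(s)` for the first zero after `s` of the solution `u c s`. For large `c` the potential
`q - c w` is very negative where `w > 0`, so by Sturm comparison with a sine the solution
oscillates there; for `c = 0` it stays positive on `(s, ∞)` because `q ≥ 0`.

Assume `α ≤ β` and pick `t₀ ∈ (T₁, T₂)` with `n t₀ > 0`. Then `α < t₀`, so a large `a` gives
`φ_a^m(T₁) = s < t₀`. The parameters `b` for which `u b s` has a zero in `(s, T₂)`, resp. is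
positive on `(s, T₂]`, form two disjoint open sets: by continuous dependence on `b`, and because
zeros are simple by uniqueness for the first-order system satisfied by `(u, p u')`. A small `b > 0`
lies in the second set and a large `b` in the first, so by connectedness some `b > 0` between
them lies in neither, and for it `φ_b^n(s) = T₂`. The case `β < α` is the same with `m`, `n`
exchanged.
-/

open Topology Real
open scoped NNReal

theorem exists_first_zero {f : ℝ → ℝ} {s t : ℝ} (hf : Continuous f)
    (hpos : ∀ᶠ r in 𝓝[>] s, 0 < f r) (hst : s < t) (ht : f t ≤ 0) :
    ∃ τ ∈ Ioc s t, f τ = 0 ∧ ∀ r ∈ Ioo s τ, 0 < f r := by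
  obtain ⟨u, hsu, hu⟩ := (nhdsGT_basis s).eventually_iff.1 hpos
  have hut : u ≤ t := not_lt.1 fun htu => (hu ⟨hst, htu⟩).not_ge ht
  obtain ⟨τ, ⟨⟨huτ, hτt⟩, hfτ⟩, hleast⟩ :=
    (isCompact_Icc.inter_right (isClosed_le hf continuous_const)).exists_isLeast
      ⟨t, ⟨hut, le_rfl⟩, ht⟩
  have hbefore : ∀ r ∈ Ioo s τ, 0 < f r := by
    rintro r ⟨hsr, hrτ⟩
    by_cases hru : r < u
    · exact hu ⟨hsr, hru⟩
    · by_contra! hfr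
      exact (hleast ⟨⟨not_lt.1 hru, hrτ.le.trans hτt⟩, hfr⟩).not_gt hrτ
  refine ⟨τ, ⟨hsu.trans_le huτ, hτt⟩, le_antisymm hfτ (not_lt.1 fun hneg => ?_), hbefore⟩
  have hr : (s + u) / 2 ∈ Ioo s u := ⟨by linarith, by linarith⟩
  obtain ⟨z, hz, hfz⟩ := intermediate_value_Ioo' (by linarith [hr.2]) hf.continuousOn
    ⟨hneg, hu hr⟩
  exact (hbefore z ⟨hr.1.trans hz.1, hz.2⟩).ne' hfz

theorem pos_of_forall_ne_zero {f : ℝ → ℝ} {s t : ℝ} (hf : Continuous f)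
    (hpos : ∀ᶠ r in 𝓝[>] s, 0 < f r) (hne : ∀ r ∈ Ioc s t, f r ≠ 0) :
    ∀ r ∈ Ioc s t, 0 < f r := by
  intro r hr
  by_contra! hfr
  obtain ⟨τ, hτ, hfτ, -⟩ := exists_first_zero hf hpos hr.1 hfr
  exact hne τ ⟨hτ.1, hτ.2.trans hr.2⟩ hfτ

theorem frequently_pos_and_frequently_neg {f : ℝ → ℝ} {f' τ : ℝ} (hf : HasDerivAt f f' τ)
    (hf' : f' ≠ 0) (hτ : f τ = 0) :
    (∃ᶠ t in 𝓝 τ, 0 < f t) ∧ ∃ᶠ t in 𝓝 τ, f t < 0 := by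
  constructor
  · refine fun h => hf' (IsLocalMax.hasDerivAt_eq_zero ?_ hf)
    filter_upwards [h] with t ht
    simpa [hτ] using ht
  · refine fun h => hf' (IsLocalMin.hasDerivAt_eq_zero ?_ hf)
    filter_upwards [h] with t ht
    simpa [hτ] using ht

theorem TendstoUniformlyOn.eventually_forall_pos {X ι : Type*} [TopologicalSpace X]
    {l : Filter ι} {F : ι → X → ℝ} {f : X → ℝ} {K : Set X} (h : TendstoUniformlyOn F f l K)
    (hK : IsCompact K) (hf : ContinuousOn f K) (hpos : ∀ x ∈ K, 0 < f x) :
    ∀ᶠ i in l, ∀ x ∈ K, 0 < F i x := by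
  obtain ⟨m, hm, hmf⟩ := hK.exists_forall_le' hf hpos
  filter_upwards [Metric.tendstoUniformlyOn_iff.1 h m hm] with i hi x hx
  have := hi x hx
  rw [Real.dist_eq, abs_lt] at this
  linarith [hmf x hx]

theorem csInf_setOf_pos_lt {w : ℝ → ℝ} (hw : Continuous w) {T₁ t₀ : ℝ} (ht₀ : T₁ < t₀)
    (hwt₀ : 0 < w t₀) : sInf {t | T₁ < t ∧ 0 < w t} < t₀ := by
  obtain ⟨t, htt₀, ht⟩ :=
    ((lt_mem_nhds ht₀).and (continuousAt_const.eventually_lt hw.continuousAt hwt₀)).exists_lt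
  exact (csInf_le ⟨T₁, fun _ hr => hr.1.le⟩ ht).trans_lt htt₀

/-- The first-order system `x₁' = x₂ / p`, `x₂' = (q - W) x₁` satisfied by `(f, p f')`. -/
def sturmField (p q W : ℝ → ℝ) (t : ℝ) (x : ℝ × ℝ) : ℝ × ℝ :=
  (x.2 / p t, q t * x.1 - W t * x.1)

theorem lipschitzWith_sturmField {p q W : ℝ → ℝ} {t : ℝ} {K : ℝ≥0} (hpt : 0 < p t)
    (hp : 1 / p t ≤ K) (hqW : |q t - W t| ≤ K) : LipschitzWith K (sturmField p q W t) := by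
  refine LipschitzWith.of_dist_le_mul fun x y => ?_
  simp only [sturmField, Prod.dist_eq, Real.dist_eq]
  refine max_le ?_ ?_
  · calc |x.2 / p t - y.2 / p t| = 1 / p t * |x.2 - y.2| := by
          rw [← sub_div, abs_div, abs_of_pos hpt]; ring
      _ ≤ K * max |x.1 - y.1| |x.2 - y.2| := by gcongr; exact le_max_right _ _
  · calc |q t * x.1 - W t * x.1 - (q t * y.1 - W t * y.1)| = |q t - W t| * |x.1 - y.1| := by
          rw [← abs_mul]; ring_nf
      _ ≤ K * max |x.1 - y.1| |x.2 - y.2| := by gcongr; exact le_max_left _ _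

structure IsSturmSolution (p q W : ℝ → ℝ) (s : ℝ) (f g : ℝ → ℝ) : Prop where
  apply_start : f s = 0
  deriv_start : g s = 1 / p s
  hasDerivAt : ∀ t, HasDerivAt f (g t) t
  hasDerivAt_flux : ∀ t, HasDerivAt (fun τ => p τ * g τ) (q t * f t - W t * f t) t

namespace IsSturmSolution

variable {p q W f g : ℝ → ℝ} {s : ℝ}

theorem continuous (S : IsSturmSolution p q W s f g) : Continuous f :=
  continuous_iff_continuousAt.2 fun t => (S.hasDerivAt t).continuousAt

theorem continuous_flux (S : IsSturmSolution p q W s f g) : Continuous fun t => p t * g t :=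
  continuous_iff_continuousAt.2 fun t => (S.hasDerivAt_flux t).continuousAt

theorem flux_start (S : IsSturmSolution p q W s f g) (hps : 0 < p s) : p s * g s = 1 := by
  rw [S.deriv_start, mul_one_div_cancel hps.ne']

theorem hasDerivAt_trajectory (S : IsSturmSolution p q W s f g) (hpp : ∀ t, 0 < p t) (t : ℝ) :
    HasDerivAt (fun t => (f t, p t * g t)) (sturmField p q W t (f t, p t * g t)) t := by
  refine ((S.hasDerivAt t).prodMk (S.hasDerivAt_flux t)).congr_deriv ?_
  simp only [sturmField, mul_div_cancel_left₀ _ (hpp t).ne']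

theorem pos_of_flux_pos (S : IsSturmSolution p q W s f g) (hpp : ∀ t, 0 < p t) {t : ℝ}
    (hst : s < t) (hflux : ∀ r ∈ Icc s t, 0 < p r * g r) : 0 < f t := by
  have hmono : StrictMonoOn f (Icc s t) := by
    refine strictMonoOn_of_deriv_pos (convex_Icc s t) S.continuous.continuousOn fun r hr => ?_
    rw [interior_Icc] at hr
    rw [(S.hasDerivAt r).deriv]
    exact pos_of_mul_pos_right (hflux r (Ioo_subset_Icc_self hr)) (hpp r).le
  simpa [S.apply_start] using
    hmono (left_mem_Icc.2 hst.le) (right_mem_Icc.2 hst.le) hst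

theorem exists_flux_pos (S : IsSturmSolution p q W s f g) (hpp : ∀ t, 0 < p t) :
    ∃ ε > 0, ∀ r ∈ Icc s (s + ε), 0 < p r * g r := by
  obtain ⟨ε, hε, hflux⟩ := (nhds_basis_Icc_pos s).eventually_iff.1
    ((S.continuous_flux.tendsto s).eventually_const_lt (u := 0) (by simp [S.flux_start (hpp s)]))
  exact ⟨ε, hε, fun r hr => hflux ⟨by linarith [hr.1], hr.2⟩⟩

theorem eventually_pos (S : IsSturmSolution p q W s f g) (hpp : ∀ t, 0 < p t) :
    ∀ᶠ t in 𝓝[>] s, 0 < f t := by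
  obtain ⟨ε, hε, hflux⟩ := S.exists_flux_pos hpp
  filter_upwards [Ioo_mem_nhdsGT (lt_add_of_pos_right s hε)] with t ht
  exact S.pos_of_flux_pos hpp ht.1 fun r hr => hflux r ⟨hr.1, hr.2.trans ht.2.le⟩

theorem deriv_ne_zero_of_eq_zero (S : IsSturmSolution p q W s f g) (hp : Continuous p)
    (hpp : ∀ t, 0 < p t) (hq : Continuous q) (hW : Continuous W) {τ : ℝ} (hsτ : s ≤ τ)
    (hτ : f τ = 0) : g τ ≠ 0 := by
  intro hgτ
  have hcoef : Continuous fun t => 1 / p t + |q t - W t| :=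
    (continuous_const.div hp fun t => (hpp t).ne').add (hq.sub hW).abs
  obtain ⟨B, hB⟩ := (isCompact_Icc (a := s) (b := τ)).bddAbove_image hcoef.continuousOn
  have hlip : ∀ t ∈ Ioc s τ, LipschitzOnWith B.toNNReal (sturmField p q W t) univ := by
    intro t ht
    have hBt : 1 / p t + |q t - W t| ≤ B.toNNReal :=
      (hB (mem_image_of_mem _ (Ioc_subset_Icc_self ht))).trans (Real.le_coe_toNNReal B)
    refine (lipschitzWith_sturmField (hpp t) ?_ ?_).lipschitzOnWith
    · linarith [abs_nonneg (q t - W t)]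
    · linarith [one_div_pos.2 (hpp t)]
  have hzero := ODE_solution_unique_of_mem_Icc_left hlip
    (fun t _ => (S.hasDerivAt_trajectory hpp t).continuousAt.continuousWithinAt)
    (fun t _ => (S.hasDerivAt_trajectory hpp t).hasDerivWithinAt) (fun _ _ => mem_univ _)
    (g := fun _ => 0) continuousOn_const
    (fun t _ => (hasDerivWithinAt_const t (Iic t) 0).congr_deriv (by ext <;> simp [sturmField]))
    (fun _ _ => mem_univ _) (by simp [hτ, hgτ]) (left_mem_Icc.2 hsτ)
  have := congrArg Prod.snd hzero
  simp only [S.flux_start (hpp s)] at this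
  exact one_ne_zero this

theorem pos_of_forall_le (S : IsSturmSolution p q W s f g) (hpp : ∀ t, 0 < p t)
    (hW : ∀ t, W t ≤ q t) {t : ℝ} (hst : s < t) : 0 < f t := by
  by_contra! hft
  obtain ⟨τ, hτ, hfτ, hpos⟩ := exists_first_zero S.continuous (S.eventually_pos hpp) hst hft
  have hmono : MonotoneOn (fun r => p r * g r) (Icc s τ) := by
    refine monotoneOn_of_deriv_nonneg (convex_Icc s τ) S.continuous_flux.continuousOn
      (fun r _ => (S.hasDerivAt_flux r).differentiableAt.differentiableWithinAt) fun r hr => ?_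
    rw [interior_Icc] at hr
    rw [(S.hasDerivAt_flux r).deriv, ← sub_mul]
    exact mul_nonneg (sub_nonneg.2 (hW r)) (hpos r hr).le
  refine hfτ.not_gt (S.pos_of_flux_pos hpp hτ.1 fun r hr => ?_)
  have : p s * g s ≤ p r * g r := hmono (left_mem_Icc.2 hτ.1.le) hr hr.1
  rw [S.flux_start (hpp s)] at this
  exact one_pos.trans_le this

theorem exists_zero_of_forall_le (S : IsSturmSolution p q W s f g) (hp : Continuous p)
    (hpp : ∀ t, 0 < p t) {t₁ t₂ : ℝ} (h1 : s < t₁) (h12 : t₁ < t₂)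
    (hW : ∀ t ∈ Icc t₁ t₂, q t + (π / ∫ x in t₁..t₂, 1 / p x) ^ 2 / p t ≤ W t) :
    ∃ z ∈ Ioc s t₂, f z = 0 := by
  by_contra! hne
  have hf := pos_of_forall_ne_zero S.continuous (S.eventually_pos hpp) hne
  have hip : Continuous fun x => 1 / p x := continuous_const.div hp fun t => (hpp t).ne'
  set L := ∫ x in t₁..t₂, 1 / p x
  set ω := π / L
  have hL : 0 < L := intervalIntegral.intervalIntegral_pos_of_pos (hip.intervalIntegrable _ _)
    (fun x => one_div_pos.2 (hpp x)) h12
  have hω : 0 < ω := div_pos pi_pos hL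
  set θ : ℝ → ℝ := fun t => ω * ∫ x in t₁..t, 1 / p x
  have hθ : ∀ t, HasDerivAt θ (ω * (1 / p t)) t := fun t =>
    (intervalIntegral.integral_hasDerivAt_right (hip.intervalIntegrable _ _)
      (hip.stronglyMeasurableAtFilter _ _) hip.continuousAt).const_mul ω
  have hθ₁ : θ t₁ = 0 := by simp [θ]
  have hθ₂ : θ t₂ = π := div_mul_cancel₀ π hL.ne'
  have hθmono : Monotone θ := monotone_of_deriv_nonneg (fun t => (hθ t).differentiableAt)
    fun t => (hθ t).deriv ▸ mul_nonneg hω.le (one_div_pos.2 (hpp t)).le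
  -- `sin ∘ θ` solves `(p y')' + (ω² / p) y = 0` and `wr` is its Wronskian with `f`.
  set wr : ℝ → ℝ := fun t => p t * g t * sin (θ t) - f t * (ω * cos (θ t))
  have hwr : ∀ t, HasDerivAt wr (f t * sin (θ t) * (q t - W t + ω ^ 2 / p t)) t := by
    intro t
    refine (((S.hasDerivAt_flux t).mul (hθ t).sin).sub
      ((S.hasDerivAt t).mul ((hθ t).cos.const_mul ω))).congr_deriv ?_
    field_simp [(hpp t).ne']
    ring
  have hanti : AntitoneOn wr (Icc t₁ t₂) := by
    refine antitoneOn_of_deriv_nonpos (convex_Icc t₁ t₂)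
      (HasDerivAt.continuousOn fun t _ => hwr t)
      (fun t _ => (hwr t).differentiableAt.differentiableWithinAt) fun t ht => ?_
    rw [interior_Icc] at ht
    rw [(hwr t).deriv]
    have hsin : 0 ≤ sin (θ t) := sin_nonneg_of_nonneg_of_le_pi
      (hθ₁ ▸ hθmono ht.1.le) (hθ₂ ▸ hθmono ht.2.le)
    have hcoef : q t - W t + ω ^ 2 / p t ≤ 0 := by linarith [hW t (Ioo_subset_Icc_self ht)]
    exact mul_nonpos_of_nonneg_of_nonpos
      (mul_nonneg (hf t ⟨h1.trans ht.1, ht.2.le⟩).le hsin) hcoef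
  have hends := hanti (left_mem_Icc.2 h12.le) (right_mem_Icc.2 h12.le) h12.le
  simp only [wr, hθ₁, hθ₂, sin_zero, sin_pi, cos_zero, cos_pi] at hends
  nlinarith [hf t₁ ⟨h1, h12.le⟩, hf t₂ ⟨h1.trans h12, le_rfl⟩]

end IsSturmSolution

theorem phiStep_coe {u : ℝ → ℝ → ℝ → ℝ} {c s : ℝ} (h : (zeroSet u c s).Nonempty) :
    phiStep u c s = (sInf (zeroSet u c s) : ℝ) := by
  simp [phiStep, phiE, h]

namespace IsSolFamily

variable {p q w : ℝ → ℝ} {u u' : ℝ → ℝ → ℝ → ℝ}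

theorem isSturmSolution (hF : IsSolFamily p q w u u') (c s : ℝ) :
    IsSturmSolution p q (fun t => c * w t) s (u c s) (u' c s) :=
  ⟨(hF c s).1, (hF c s).2.1, fun t => ((hF c s).2.2 t).1, fun t => ((hF c s).2.2 t).2⟩

theorem dist_trajectory_le (hF : IsSolFamily p q w u u') (hpp : ∀ t, 0 < p t)
    {c c' s T ε : ℝ} {K : ℝ≥0}
    (hlip : ∀ t ∈ Ico s T, LipschitzWith K (sturmField p q (fun t => c' * w t) t))
    (hε : ∀ t ∈ Ico s T, |c' - c| * |w t| * |u c s t| ≤ ε) :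
    ∀ t ∈ Icc s T, dist (u c s t, p t * u' c s t) (u c' s t, p t * u' c' s t)
      ≤ gronwallBound 0 K ε (t - s) := by
  have hX := fun c => (hF.isSturmSolution c s).hasDerivAt_trajectory hpp
  have happrox : ∀ t ∈ Ico s T, dist (sturmField p q (fun t => c * w t) t (u c s t, p t * u' c s t))
      (sturmField p q (fun t => c' * w t) t (u c s t, p t * u' c s t)) ≤ ε := by
    intro t ht
    simp only [sturmField, Prod.dist_eq, dist_self, Real.dist_eq]
    rw [max_eq_right (abs_nonneg _)]
    refine le_of_eq_of_le ?_ (hε t ht)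
    rw [← abs_mul, ← abs_mul]
    ring_nf
  have := dist_le_of_approx_trajectories_ODE_of_mem (s := fun _ => univ) (δ := 0)
    (fun t ht => (hlip t ht).lipschitzOnWith)
    (fun t _ => (hX c t).continuousAt.continuousWithinAt)
    (fun t _ => (hX c t).hasDerivWithinAt) happrox (fun _ _ => mem_univ _)
    (fun t _ => (hX c' t).continuousAt.continuousWithinAt)
    (fun t _ => (hX c' t).hasDerivWithinAt) (fun t _ => (dist_self _).le) (fun _ _ => mem_univ _)
    (by simp [(hF c s).1, (hF c' s).1, (hF c s).2.1, (hF c' s).2.1])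
  rwa [add_zero] at this

theorem tendstoUniformlyOn_trajectory (hF : IsSolFamily p q w u u') (hp : Continuous p)
    (hpp : ∀ t, 0 < p t) (hq : Continuous q) (hw : Continuous w) (c s T : ℝ) :
    TendstoUniformlyOn (fun c' t => (u c' s t, p t * u' c' s t))
      (fun t => (u c s t, p t * u' c s t)) (𝓝 c) (Icc s T) := by
  have hcoef : Continuous fun t => 1 / p t + (|q t| + (|w t| + |u c s t|)) :=
    (continuous_const.div hp fun t => (hpp t).ne').add
      (hq.abs.add (hw.abs.add (hF.isSturmSolution c s).continuous.abs))
  obtain ⟨B, hB⟩ := (isCompact_Icc (a := s) (b := T)).bddAbove_image hcoef.continuousOn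
  have hbound : ∀ t ∈ Icc s T, 1 / p t ≤ B ∧ |q t| ≤ B ∧ |w t| ≤ B ∧ |u c s t| ≤ B := by
    intro t ht
    have : 1 / p t + (|q t| + (|w t| + |u c s t|)) ≤ B := hB (mem_image_of_mem _ ht)
    have := one_div_pos.2 (hpp t)
    refine ⟨?_, ?_, ?_, ?_⟩ <;>
      linarith [abs_nonneg (q t), abs_nonneg (w t), abs_nonneg (u c s t)]
  set K : ℝ≥0 := (B + (|c| + 1) * B).toNNReal
  have hlip : ∀ c', |c' - c| ≤ 1 → ∀ t ∈ Icc s T,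
      LipschitzWith K (sturmField p q (fun t => c' * w t) t) := by
    intro c' hc' t ht
    obtain ⟨hpt, hqt, hwt, hut⟩ := hbound t ht
    have hB0 : 0 ≤ B := (abs_nonneg _).trans hut
    have hc'c : |c'| ≤ |c| + 1 := by linarith [abs_sub_abs_le_abs_sub c' c]
    refine lipschitzWith_sturmField (hpp t) ?_ ?_ <;>
      refine le_trans ?_ (Real.le_coe_toNNReal _)
    · nlinarith [abs_nonneg c]
    · calc |q t - c' * w t| ≤ |q t| + |c'| * |w t| := by
            rw [← abs_mul]; exact abs_sub _ _
        _ ≤ B + (|c| + 1) * B := by gcongr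
  have hclose : ∀ c', |c' - c| ≤ 1 → ∀ t ∈ Icc s T,
      dist (u c s t, p t * u' c s t) (u c' s t, p t * u' c' s t)
        ≤ gronwallBound 0 K (|c' - c| * (B * B)) (T - s) := by
    intro c' hc' t ht
    refine (hF.dist_trajectory_le (ε := |c' - c| * (B * B)) hpp
      (fun r hr => hlip c' hc' r (Ico_subset_Icc_self hr))
      (fun r hr => ?_) t ht).trans ?_
    · obtain ⟨-, -, hwr, hur⟩ := hbound r (Ico_subset_Icc_self hr)
      rw [mul_assoc]
      gcongr
      exact (abs_nonneg _).trans hwr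
    · exact gronwallBound_mono le_rfl (mul_nonneg (abs_nonneg _) (mul_self_nonneg B)) K.2
        (by linarith [ht.2])
  have hlim : Tendsto (fun c' => gronwallBound 0 K (|c' - c| * (B * B)) (T - s)) (𝓝 c) (𝓝 0) := by
    have hε : Tendsto (fun c' => |c' - c| * (B * B)) (𝓝 c) (𝓝 0) := by
      have : Continuous fun c' : ℝ => |c' - c| * (B * B) := by fun_prop
      simpa using this.tendsto c
    have h0 := (gronwallBound_continuous_ε 0 K (T - s)).tendsto 0
    rw [gronwallBound_ε0_δ0] at h0
    exact h0.comp hε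
  rw [Metric.tendstoUniformlyOn_iff]
  intro ε hε
  filter_upwards [hlim.eventually (gt_mem_nhds hε), Metric.closedBall_mem_nhds c one_pos]
    with c' hc' hc'c t ht
  exact (hclose c' (by simpa [Real.dist_eq] using hc'c) t ht).trans_lt hc'

theorem isOpen_setOf_exists_zero (hF : IsSolFamily p q w u u') (hp : Continuous p)
    (hpp : ∀ t, 0 < p t) (hq : Continuous q) (hw : Continuous w) (s T : ℝ) :
    IsOpen {c | ∃ z ∈ Ioo s T, u c s z = 0} := by
  refine isOpen_iff_mem_nhds.2 fun c ⟨τ, hτ, hτ0⟩ => ?_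
  have S := hF.isSturmSolution c s
  have hderiv := S.deriv_ne_zero_of_eq_zero hp hpp hq (continuous_const.mul hw) hτ.1.le hτ0
  obtain ⟨hpos, hneg⟩ := frequently_pos_and_frequently_neg (S.hasDerivAt τ) hderiv hτ0
  obtain ⟨t₁, ht₁pos, ht₁⟩ := (hpos.and_eventually (Ioo_mem_nhds hτ.1 hτ.2)).exists
  obtain ⟨t₂, ht₂neg, ht₂⟩ := (hneg.and_eventually (Ioo_mem_nhds hτ.1 hτ.2)).exists
  have hconv : ∀ t ∈ Ioo s T, Tendsto (fun c' => u c' s t) (𝓝 c) (𝓝 (u c s t)) := fun t ht =>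
    (continuous_fst.tendsto _).comp
      ((hF.tendstoUniformlyOn_trajectory hp hpp hq hw c s T).tendsto_at (Ioo_subset_Icc_self ht))
  filter_upwards [(hconv t₁ ht₁).eventually_const_lt ht₁pos,
    (hconv t₂ ht₂).eventually_lt_const ht₂neg] with c' h₁ h₂
  obtain ⟨z, hz, hz0⟩ := intermediate_value_uIcc (hF.isSturmSolution c' s).continuous.continuousOn
    (mem_uIcc.2 (Or.inr ⟨h₂.le, h₁.le⟩))
  exact ⟨z, ordConnected_Ioo.uIcc_subset ht₁ ht₂ hz, hz0⟩

theorem isOpen_setOf_forall_pos (hF : IsSolFamily p q w u u') (hp : Continuous p)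
    (hpp : ∀ t, 0 < p t) (hq : Continuous q) (hw : Continuous w) (s T : ℝ) :
    IsOpen {c | ∀ t ∈ Ioc s T, 0 < u c s t} := by
  refine isOpen_iff_mem_nhds.2 fun c hc => ?_
  have S := hF.isSturmSolution c s
  obtain ⟨ε, hε, hflux⟩ := S.exists_flux_pos hpp
  have hnear : ∀ᶠ c' in 𝓝 c, ∀ r ∈ Icc s (s + ε), 0 < p r * u' c' s r :=
    (uniformContinuous_snd.comp_tendstoUniformlyOn
      (hF.tendstoUniformlyOn_trajectory hp hpp hq hw c s (s + ε))).eventually_forall_pos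
      isCompact_Icc S.continuous_flux.continuousOn hflux
  have hfar : ∀ᶠ c' in 𝓝 c, ∀ r ∈ Icc (s + ε) T, 0 < u c' s r :=
    (uniformContinuous_fst.comp_tendstoUniformlyOn
      ((hF.tendstoUniformlyOn_trajectory hp hpp hq hw c s T).mono
        (Icc_subset_Icc_left (by linarith)))).eventually_forall_pos
      isCompact_Icc S.continuous.continuousOn fun r hr => hc r ⟨by linarith [hr.1], hr.2⟩
  filter_upwards [hnear, hfar] with c' hnear hfar t ht
  by_cases htε : t ≤ s + ε
  · exact (hF.isSturmSolution c' s).pos_of_flux_pos hpp ht.1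
      fun r hr => hnear r ⟨hr.1, hr.2.trans htε⟩
  · exact hfar t ⟨(not_le.1 htε).le, ht.2⟩

theorem eventually_exists_zero (hF : IsSolFamily p q w u u') (hp : Continuous p)
    (hpp : ∀ t, 0 < p t) (hq : Continuous q) (hw : Continuous w) {s t₀ T : ℝ} (hs : s < t₀)
    (hT : t₀ < T) (hwt₀ : 0 < w t₀) : ∀ᶠ c in atTop, ∃ z ∈ Ioo s T, u c s z = 0 := by
  obtain ⟨ε, hε, hwin⟩ := (nhds_basis_Icc_pos t₀).eventually_iff.1
    (((hw.tendsto t₀).eventually_const_lt (half_lt_self hwt₀)).and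
      ((lt_mem_nhds hs).and (gt_mem_nhds hT)))
  have hsub : t₀ - ε < t₀ + ε := by linarith
  set ω := π / ∫ x in (t₀ - ε)..(t₀ + ε), 1 / p x
  have hcoef : Continuous fun t => q t + ω ^ 2 / p t :=
    hq.add (continuous_const.div hp fun t => (hpp t).ne')
  obtain ⟨M, hM⟩ := (isCompact_Icc (a := t₀ - ε) (b := t₀ + ε)).bddAbove_image hcoef.continuousOn
  filter_upwards [eventually_ge_atTop (2 * M / w t₀), eventually_ge_atTop 0] with c hcM hc0
  have hbig : ∀ t ∈ Icc (t₀ - ε) (t₀ + ε), q t + ω ^ 2 / p t ≤ c * w t := by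
    intro t ht
    have hMt : q t + ω ^ 2 / p t ≤ M := hM (mem_image_of_mem _ ht)
    have hcw : c * (w t₀ / 2) ≤ c * w t := mul_le_mul_of_nonneg_left (hwin ht).1.le hc0
    rw [div_le_iff₀ hwt₀] at hcM
    linarith
  obtain ⟨z, hz, hz0⟩ := (hF.isSturmSolution c s).exists_zero_of_forall_le hp hpp
    (hwin (left_mem_Icc.2 hsub.le)).2.1 hsub hbig
  exact ⟨z, ⟨hz.1, hz.2.trans_lt (hwin (right_mem_Icc.2 hsub.le)).2.2⟩, hz0⟩

theorem exists_phiStep_lt (hF : IsSolFamily p q w u u') (hp : Continuous p)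
    (hpp : ∀ t, 0 < p t) (hq : Continuous q) (hw : Continuous w) {s t₁ T : ℝ} (hs : s < t₁)
    (hT : t₁ < T) (hwt₁ : 0 < w t₁) : ∃ a > 0, ∃ r < T, phiStep u a s = r := by
  obtain ⟨a, ha, z, hz, hz0⟩ :=
    ((eventually_gt_atTop 0).and (hF.eventually_exists_zero hp hpp hq hw hs hT hwt₁)).exists
  have hmem : z ∈ zeroSet u a s := ⟨hz.1, hz0⟩
  exact ⟨a, ha, _, (csInf_le ⟨s, fun _ hr => hr.1.le⟩ hmem).trans_lt hz.2, phiStep_coe ⟨z, hmem⟩⟩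

theorem exists_phiStep_eq (hF : IsSolFamily p q w u u') (hp : Continuous p)
    (hpp : ∀ t, 0 < p t) (hq : Continuous q) (hqnn : ∀ t, 0 ≤ q t) (hw : Continuous w)
    {s t₀ T : ℝ} (hs : s < t₀) (hT : t₀ < T) (hwt₀ : 0 < w t₀) : ∃ b > 0, phiStep u b s = T := by
  set U := {c | ∃ z ∈ Ioo s T, u c s z = 0}
  set V := {c | ∀ t ∈ Ioc s T, 0 < u c s t}
  have hUV : Disjoint U V := disjoint_left.2 fun _ ⟨z, hz, hz0⟩ hc =>
    (hc z (Ioo_subset_Ioc_self hz)).ne' hz0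
  have h0V : (0 : ℝ) ∈ V := fun t ht =>
    (hF.isSturmSolution 0 s).pos_of_forall_le hpp (fun t => by simpa using hqnn t) ht.1
  have hUopen : IsOpen U := hF.isOpen_setOf_exists_zero hp hpp hq hw s T
  have hVopen : IsOpen V := hF.isOpen_setOf_forall_pos hp hpp hq hw s T
  have hnear0 : ∀ᶠ c in 𝓝 0, c ∈ V := hVopen.mem_nhds h0V
  obtain ⟨b₁, hb₁, hb₁V⟩ := hnear0.exists_gt
  obtain ⟨b₂, hb₁₂, hb₂U⟩ :=
    ((eventually_gt_atTop b₁).and (hF.eventually_exists_zero hp hpp hq hw hs hT hwt₀)).exists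
  obtain ⟨b, hb, hbUV⟩ := not_subset.1 fun hsub =>
    (isPreconnected_Icc.subset_or_subset hUopen hVopen hUV hsub).elim
      (fun h => disjoint_left.1 hUV (h (left_mem_Icc.2 hb₁₂.le)) hb₁V)
      (fun h => disjoint_left.1 hUV hb₂U (h (right_mem_Icc.2 hb₁₂.le)))
  simp only [mem_union, not_or] at hbUV
  obtain ⟨hbU, hbV⟩ := hbUV
  obtain ⟨t, ht, hut⟩ : ∃ t ∈ Ioc s T, u b s t ≤ 0 := by simpa [V, and_assoc] using hbV
  have S := hF.isSturmSolution b s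
  obtain ⟨τ, hτ, hτ0, -⟩ := exists_first_zero S.continuous (S.eventually_pos hpp) ht.1 hut
  have hτT : τ = T := by
    by_contra hne
    exact hbU ⟨τ, ⟨hτ.1, lt_of_le_of_ne (hτ.2.trans ht.2) hne⟩, hτ0⟩
  have hleast : IsLeast (zeroSet u b s) T :=
    ⟨⟨hτT ▸ hτ.1, hτT ▸ hτ0⟩, fun z hz => not_lt.1 fun hzT => hbU ⟨z, ⟨hz.1, hzT⟩, hz.2⟩⟩
  exact ⟨b, hb₁.trans_le hb.1, by rw [phiStep_coe hleast.nonempty, hleast.csInf_eq]⟩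

end IsSolFamily

theorem exists_phiStep_phiStep_eq {p q w₁ w₂ : ℝ → ℝ} {u₁ u₁' u₂ u₂' : ℝ → ℝ → ℝ → ℝ}
    {T₁ T₂ : ℝ} (hF₁ : IsSolFamily p q w₁ u₁ u₁') (hF₂ : IsSolFamily p q w₂ u₂ u₂')
    (hp : Continuous p) (hpp : ∀ t, 0 < p t) (hq : Continuous q) (hqnn : ∀ t, 0 ≤ q t)
    (hw₁ : Continuous w₁) (hw₂ : Continuous w₂) (h₁ : {t | T₁ < t ∧ 0 < w₁ t}.Nonempty)
    (h₂ : ∃ t ∈ Ioo T₁ T₂, 0 < w₂ t)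
    (hle : sInf {t | T₁ < t ∧ 0 < w₁ t} ≤ sInf {t | T₁ < t ∧ 0 < w₂ t}) :
    ∃ a > 0, ∃ b > 0, phiStep u₂ b (phiStep u₁ a T₁) = T₂ := by
  obtain ⟨t₀, ht₀, hwt₀⟩ := h₂
  obtain ⟨t₁, ⟨hT₁t₁, hwt₁⟩, ht₁t₀⟩ :=
    exists_lt_of_csInf_lt h₁ (hle.trans_lt (csInf_setOf_pos_lt hw₂ ht₀.1 hwt₀))
  obtain ⟨a, ha, r, hrt₀, hr⟩ := hF₁.exists_phiStep_lt hp hpp hq hw₁ hT₁t₁ ht₁t₀ hwt₁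
  obtain ⟨b, hb, hb'⟩ := hF₂.exists_phiStep_eq hp hpp hq hqnn hw₂ hrt₀ ht₀.2 hwt₀
  exact ⟨a, ha, b, hb, hr ▸ hb'⟩

theorem C2_nonempty_general
    (p q m n : ℝ → ℝ) (uM uM' uN uN' : ℝ → ℝ → ℝ → ℝ) (T₁ T₂ : ℝ)
    (hp : Continuous p) (hq : Continuous q) (hm : Continuous m) (hn : Continuous n)
    (hppos : ∀ t, 0 < p t) (hqnn : ∀ t, 0 ≤ q t)
    (hM : IsSolFamily p q m uM uM') (hN : IsSolFamily p q n uN uN')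
    (hmplus : ∃ t ∈ Ioo T₁ T₂, 0 < m t) (hnplus : ∃ t ∈ Ioo T₁ T₂, 0 < n t) :
    ((CGt uM uN T₁ T₂ 2).Nonempty ∨ (CLt uM uN T₁ T₂ 2).Nonempty) ∧
    (sInf {t | T₁ < t ∧ 0 < m t} ≤ sInf {t | T₁ < t ∧ 0 < n t} →
      (CGt uM uN T₁ T₂ 2).Nonempty) ∧
    (sInf {t | T₁ < t ∧ 0 < n t} < sInf {t | T₁ < t ∧ 0 < m t} →
      (CLt uM uN T₁ T₂ 2).Nonempty) := by
  obtain ⟨tm, htm, hmtm⟩ := hmplus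
  obtain ⟨tn, htn, hntn⟩ := hnplus
  have hGt : sInf {t | T₁ < t ∧ 0 < m t} ≤ sInf {t | T₁ < t ∧ 0 < n t} →
      (CGt uM uN T₁ T₂ 2).Nonempty := fun hle => by
    obtain ⟨a, ha, b, hb, hab⟩ := exists_phiStep_phiStep_eq hM hN hp hppos hq hqnn hm hn
      ⟨tm, htm.1, hmtm⟩ ⟨tn, htn, hntn⟩ hle
    exact ⟨(a, b), ha, hb, hab⟩
  have hLt : sInf {t | T₁ < t ∧ 0 < n t} < sInf {t | T₁ < t ∧ 0 < m t} →
      (CLt uM uN T₁ T₂ 2).Nonempty := fun hlt => by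
    obtain ⟨b, hb, a, ha, hba⟩ := exists_phiStep_phiStep_eq hN hM hp hppos hq hqnn hn hm
      ⟨tn, htn.1, hntn⟩ ⟨tm, htm, hmtm⟩ hlt.le
    exact ⟨(a, b), ha, hb, hba⟩
  exact ⟨(le_or_gt _ _).imp hGt hLt, hGt, hLt⟩

/-- If `m⁺ ≢ 0` and `n⁺ ≢ 0` on `(T₁,T₂)`, then `C₂^{>++}` or
`C₂^{<++}` is nonempty; more precisely, with `α = inf{t > T₁ : m t > 0}` and
`β = inf{t > T₁ : n t > 0}`: if `α ≤ β` then `C₂^{>++} ≠ ∅`, and if `β < α`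
then `C₂^{<++} ≠ ∅`. -/
theorem C2_nonempty
    (p q m n : ℝ → ℝ) (uM uM' uN uN' : ℝ → ℝ → ℝ → ℝ) (T₁ T₂ : ℝ)
    (hT : T₁ < T₂)
    (hp : Continuous p) (hq : Continuous q) (hm : Continuous m) (hn : Continuous n)
    (hppos : ∀ t, 0 < p t) (hqnn : ∀ t, 0 ≤ q t)
    (hM : IsSolFamily p q m uM uM') (hN : IsSolFamily p q n uN uN')
    (hmplus : ∃ t ∈ Ioo T₁ T₂, 0 < m t) (hnplus : ∃ t ∈ Ioo T₁ T₂, 0 < n t) :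
    ((CGt uM uN T₁ T₂ 2).Nonempty ∨ (CLt uM uN T₁ T₂ 2).Nonempty) ∧
    (sInf {t | T₁ < t ∧ 0 < m t} ≤ sInf {t | T₁ < t ∧ 0 < n t} →
      (CGt uM uN T₁ T₂ 2).Nonempty) ∧
    (sInf {t | T₁ < t ∧ 0 < n t} < sInf {t | T₁ < t ∧ 0 < m t} →
      (CLt uM uN T₁ T₂ 2).Nonempty) :=
  C2_nonempty_general p q m n uM uM' uN uN' T₁ T₂ hp hq hm hn hppos hqnn hM hN hmplus hnplus
end
end
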